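/- arXiv:math/0609354 — 6 statements merged into one kernel-verified Lean document; each statement's English description precedes it below -/
import Mathlib

section
/- Let R be a ring and let I be a two-sided ideal of R that has a local unit (an increasing net of idempotents acting as units on every element of I). If there exists a two-sided ideal J of I such that the quotient I/J is a unital simple ring, then there exists a two-sided ideal M of R such that R/M is isomorphic to I/J. -/
/-- A local unit on a subset `S` of a ring: an increasing net of idempotents contained in `S`
which act as a unit on every element of `S`. -/
structure LocalUnit {R : Type*} [NonUnitalRing R] (S : Set R) where
  ι : Type
  [pre : Preorder ι]
  directed : ∀ i j : ι, ∃ k, i ≤ k ∧ j ≤ k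
  e : ι → R
  mem : ∀ i, e i ∈ S
  idem : ∀ i, e i * e i = e i
  incr : ∀ i j, i ≤ j → e i * e j = e i ∧ e j * e i = e i
  unit : ∀ a ∈ S, ∃ i, a * e i = a ∧ e i * a = a

attribute [instance] LocalUnit.pre

/-- If `I` is a two-sided ideal of a ring `R` possessing a local unit, and `J` is a two-sided
ideal of `I` such that `I/J` is a unital simple ring, then there is a two-sided ideal `M` of
`R` with `R/M ≅ I/J`. -/
theorem ideal_with_local_unit_unital_simple_quotient
    {R : Type*} [NonUnitalRing R] (I : TwoSidedIdeal R)
    (hI : Nonempty (LocalUnit (I : Set R)))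
    (J : TwoSidedIdeal I)
    (hunital : ∃ u : J.ringCon.Quotient, ∀ x : J.ringCon.Quotient, u * x = x ∧ x * u = x)
    (hsimple : IsSimpleOrder (TwoSidedIdeal J.ringCon.Quotient)) :
    ∃ M : TwoSidedIdeal R, Nonempty (M.ringCon.Quotient ≃+* J.ringCon.Quotient) := by
  classical
  obtain ⟨u, hu⟩ := hunital
  obtain ⟨v, hv⟩ : ∃ v : I, (v : J.ringCon.Quotient) = u := Quotient.exists_rep u
  have hm : ∀ r : R, (v : R) * r * (v : R) ∈ I := fun r =>
    I.mul_mem_right _ _ (I.mul_mem_right _ _ v.2)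
  have hvv : ((v * v : I) : J.ringCon.Quotient) = u := by
    rw [RingCon.coe_mul, hv, (hu u).1]
  let f : R → J.ringCon.Quotient := fun r => ((⟨(v : R) * r * (v : R), hm r⟩ : I) : _)
  have hf_mul : ∀ r s : R, f (r * s) = f r * f s := by
    intro r s
    show ((⟨(v : R) * (r * s) * (v : R), hm _⟩ : I) : J.ringCon.Quotient)
      = ((⟨(v : R) * r * (v : R), hm r⟩ : I) : J.ringCon.Quotient)
        * ((⟨(v : R) * s * (v : R), hm s⟩ : I) : J.ringCon.Quotient)
    have h1 : (⟨(v : R) * r * (v : R), hm r⟩ : I) * ⟨(v : R) * s * (v : R), hm s⟩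
        = (⟨(v : R) * r, I.mul_mem_right _ _ v.2⟩ : I) * (v * v)
          * ⟨s * (v : R), I.mul_mem_left _ _ v.2⟩ := by
      ext
      push_cast
      simp only [mul_assoc]
    have h2 : (⟨(v : R) * (r * s) * (v : R), hm _⟩ : I)
        = (⟨(v : R) * r, I.mul_mem_right _ _ v.2⟩ : I)
          * ⟨s * (v : R), I.mul_mem_left _ _ v.2⟩ := by
      ext
      push_cast
      simp only [mul_assoc]
    rw [← RingCon.coe_mul, h1, RingCon.coe_mul, RingCon.coe_mul, hvv,
      (hu _).2, ← RingCon.coe_mul, ← h2]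
  have hf_add : ∀ r s : R, f (r + s) = f r + f s := by
    intro r s
    show ((⟨(v : R) * (r + s) * (v : R), hm _⟩ : I) : J.ringCon.Quotient)
      = ((⟨(v : R) * r * (v : R), hm r⟩ : I) : J.ringCon.Quotient)
        + ((⟨(v : R) * s * (v : R), hm s⟩ : I) : J.ringCon.Quotient)
    rw [← RingCon.coe_add]
    congr 1
    ext
    push_cast
    simp only [mul_add, add_mul]
  have hf_zero : f 0 = 0 := by
    show ((⟨(v : R) * 0 * (v : R), hm _⟩ : I) : J.ringCon.Quotient) = 0
    have : (⟨(v : R) * 0 * (v : R), hm _⟩ : I) = 0 := by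
      ext; simp
    rw [this]
    exact RingCon.coe_zero _
  let φ : R →ₙ+* J.ringCon.Quotient :=
    { toFun := f, map_mul' := hf_mul, map_zero' := hf_zero, map_add' := hf_add }
  have hsurj : Function.Surjective φ := by
    intro x
    obtain ⟨a, ha⟩ : ∃ a : I, (a : J.ringCon.Quotient) = x := Quotient.exists_rep x
    refine ⟨(a : R), ?_⟩
    show ((⟨(v : R) * (a : R) * (v : R), hm _⟩ : I) : J.ringCon.Quotient) = x
    have : (⟨(v : R) * (a : R) * (v : R), hm _⟩ : I) = v * a * v := by
      ext; push_cast; simp only [mul_assoc]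
    rw [this, RingCon.coe_mul, RingCon.coe_mul, hv, ha, (hu x).1, (hu x).2]
  refine ⟨TwoSidedIdeal.ker φ, ⟨?_⟩⟩
  let ψ : (TwoSidedIdeal.ker φ).ringCon.Quotient →ₙ+* J.ringCon.Quotient :=
    { toFun := Quotient.lift ⇑φ fun a b h => h
      map_mul' := by rintro ⟨a⟩ ⟨b⟩; exact φ.map_mul a b
      map_zero' := φ.map_zero
      map_add' := by rintro ⟨a⟩ ⟨b⟩; exact φ.map_add a b }
  refine RingEquiv.ofBijective ψ ⟨?_, ?_⟩
  · rintro ⟨a⟩ ⟨b⟩ h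
    exact Quotient.sound h
  · intro x
    obtain ⟨r, hr⟩ := hsurj x
    exact ⟨(r : (TwoSidedIdeal.ker φ).ringCon.Quotient), hr⟩
end

section
/- Let A be a unital ring of stable rank n with elementary rank at most n−1. For every unital ring extension 0 → I → B → A → 0 (B unital, I a two-sided ideal of B with B/I ≅ A) such that the stable rank of I is at most n, the stable rank of B equals n. -/
open scoped BigOperators

variable {R : Type*}

/-- A column is unimodular if its entries admit a left Bezout relation summing to `1`. -/
def Unimodular [Ring R] {m : ℕ} (b : Fin m → R) : Prop :=
  ∃ a : Fin m → R, ∑ i, a i * b i = 1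

/-- An `(n+1)`-column is reducible if adding left multiples of the last entry to the first
`n` entries yields a unimodular `n`-column. -/
def Reducible [Ring R] {n : ℕ} (b : Fin (n + 1) → R) : Prop :=
  ∃ v : Fin n → R, Unimodular (fun i : Fin n => b i.castSucc + v i * b (Fin.last n))

/-- The stable range condition: every unimodular column of length `> n` is reducible. -/
def SRleq (R : Type*) [Ring R] (n : ℕ) : Prop :=
  ∀ m : ℕ, n ≤ m → ∀ b : Fin (m + 1) → R, Unimodular b → Reducible b

/-- The Bass stable rank, as an element of `ℕ∞`. -/
noncomputable def sr (R : Type*) [Ring R] : ℕ∞ :=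
  sInf {c : ℕ∞ | ∃ n : ℕ, c = n ∧ SRleq R n}

/-- Elementary matrices (transvections). -/
def IsElemMat [Ring R] {t : ℕ} (M : Matrix (Fin t) (Fin t) R) : Prop :=
  ∃ (i j : Fin t) (c : R), i ≠ j ∧ M = 1 + Matrix.single i j c

/-- `ERleq R k` : for every `t ≥ k + 1`, the elementary group `E_t(R)` acts transitively on
unimodular `t`-columns. -/
def ERleq (R : Type*) [Ring R] (k : ℕ) : Prop :=
  ∀ t : ℕ, k + 1 ≤ t → ∀ b c : Fin t → R, Unimodular b → Unimodular c →
    ∃ L : List (Matrix (Fin t) (Fin t) R), (∀ M ∈ L, IsElemMat M) ∧ L.prod.mulVec b = c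

/-- The elementary rank, as an element of `ℕ∞`. -/
noncomputable def er (R : Type*) [Ring R] : ℕ∞ :=
  sInf {c : ℕ∞ | ∃ k : ℕ, c = k ∧ ERleq R k}

/-- Vaserstein's `I`-unimodular columns relative to a two-sided ideal `I` of `R`:
the first entry is congruent to `1` mod `I`, the others lie in `I`, and there is a Bezout
relation of the same shape. -/
def RelUnimodular [Ring R] (I : TwoSidedIdeal R) {m : ℕ} (b : Fin (m + 1) → R) : Prop :=
  b 0 - 1 ∈ I ∧ (∀ i, i ≠ 0 → b i ∈ I) ∧
    ∃ a : Fin (m + 1) → R, (a 0 - 1 ∈ I) ∧ (∀ i, i ≠ 0 → a i ∈ I) ∧ ∑ i, a i * b i = 1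

def RelReducible [Ring R] (I : TwoSidedIdeal R) {m : ℕ} (b : Fin (m + 2) → R) : Prop :=
  ∃ v : Fin (m + 1) → R, (∀ i, v i ∈ I) ∧
    RelUnimodular I (fun i : Fin (m + 1) => b i.castSucc + v i * b (Fin.last (m + 1)))

/-- Relative (Vaserstein) stable rank `≤ n` for a two-sided ideal: every `I`-unimodular
column of length at least `n + 1` is reducible. -/
def RelSRleq [Ring R] (I : TwoSidedIdeal R) (n : ℕ) : Prop :=
  ∀ m : ℕ, n ≤ m + 1 → ∀ b : Fin (m + 2) → R, RelUnimodular I b → RelReducible I b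

/-- The relative stable rank of a two-sided ideal, as an element of `ℕ∞`. -/
noncomputable def relSr [Ring R] (I : TwoSidedIdeal R) : ℕ∞ :=
  sInf {c : ℕ∞ | ∃ n : ℕ, c = n ∧ RelSRleq I n}

/-!
A surjection `B → A` can only lower the stable rank: lift a unimodular column of `A` together
with its Bezout defect `1 - a ⬝ b`, which maps to `0`, and reduce twice over `B`.

Conversely, let `(x, y)` be a unimodular column over `B` of length at least `n + 1`. Reducing its
image over `A` and then moving the result to `e₁` by an elementary matrix, which lifts to an
invertible matrix over `B`, turns `x` into a column `d ≡ e₁` modulo `I = ker f`. If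
`α ⬝ d + r y = 1`, then `(d, (1 - d₀) r y)` is `I`-unimodular, so the relative stable range
condition on `I` reduces it, and this reduces `(d, y)` and hence `(x, y)`.
-/

open Matrix

theorem sInf_natCast_le_iff {P : ℕ → Prop} (hP : Monotone P) {k : ℕ} :
    sInf {c : ℕ∞ | ∃ n : ℕ, c = n ∧ P n} ≤ k ↔ P k := by
  refine ⟨fun h => ?_, fun h => sInf_le ⟨k, rfl, h⟩⟩
  obtain ⟨_, ⟨n, rfl, hn⟩, hlt⟩ :=
    sInf_lt_iff.1 (h.trans_lt (ENat.natCast_lt_natCast.2 k.lt_succ_self))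
  exact hP (Nat.lt_succ_iff.1 (by exact_mod_cast hlt)) hn

section Rank

variable [Ring R]

theorem sr_le_iff {n : ℕ} : sr R ≤ n ↔ SRleq R n :=
  sInf_natCast_le_iff (P := SRleq R) fun _ _ hkk' h m hm => h m (hkk'.trans hm)

theorem er_le_iff {k : ℕ} : er R ≤ k ↔ ERleq R k :=
  sInf_natCast_le_iff (P := ERleq R) fun _ _ hkk' h t ht =>
    h t ((Nat.add_le_add_right hkk' 1).trans ht)

end Rank

section Columns

variable [Ring R] {m : ℕ}

theorem dotProduct_add_mul_const (a x u : Fin m → R) (y : R) :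
    a ⬝ᵥ (fun i => x i + u i * y) = a ⬝ᵥ x + (a ⬝ᵥ u) * y := by
  simp only [dotProduct, mul_add, Finset.sum_add_distrib, Finset.sum_mul, mul_assoc]

theorem mulVec_add_mul_const (M : Matrix (Fin m) (Fin m) R) (x u : Fin m → R) (y : R) :
    M *ᵥ (fun i => x i + u i * y) = fun i => (M *ᵥ x) i + (M *ᵥ u) i * y :=
  funext fun _ => dotProduct_add_mul_const _ _ _ _

theorem unimodular_snoc_iff {x : Fin m → R} {y : R} :
    Unimodular (Fin.snoc x y : Fin (m + 1) → R) ↔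
      ∃ (a : Fin m → R) (r : R), a ⬝ᵥ x + r * y = 1 := by
  constructor
  · rintro ⟨a, ha⟩
    exact ⟨Fin.init a, a (Fin.last m),
      by simpa [Fin.sum_univ_castSucc, dotProduct, Fin.init] using ha⟩
  · rintro ⟨a, r, ha⟩
    exact ⟨Fin.snoc a r, by simpa [Fin.sum_univ_castSucc, dotProduct] using ha⟩

theorem reducible_snoc_iff {x : Fin m → R} {y : R} :
    Reducible (Fin.snoc x y : Fin (m + 1) → R) ↔
      ∃ v : Fin m → R, Unimodular fun i => x i + v i * y := by
  simp only [Reducible, Fin.snoc_castSucc, Fin.snoc_last]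

theorem Unimodular.of_mulVec {M : Matrix (Fin m) (Fin m) R} {x : Fin m → R}
    (h : Unimodular (M *ᵥ x)) : Unimodular x := by
  obtain ⟨a, ha⟩ := h
  exact ⟨a ᵥ* M, by rw [← ha]; exact (dotProduct_mulVec a M x).symm⟩

theorem Unimodular.snoc_mulVec {M : Matrix (Fin m) (Fin m) R} (hM : IsUnit M) {x : Fin m → R}
    {y : R} (h : Unimodular (Fin.snoc x y : Fin (m + 1) → R)) :
    Unimodular (Fin.snoc (M *ᵥ x) y : Fin (m + 1) → R) := by
  obtain ⟨U, rfl⟩ := hM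
  obtain ⟨a, r, ha⟩ := unimodular_snoc_iff.1 h
  refine unimodular_snoc_iff.2 ⟨a ᵥ* ↑U⁻¹, r, ?_⟩
  rwa [dotProduct_mulVec, vecMul_vecMul, Units.inv_mul, vecMul_one]

theorem Unimodular.snoc_add_mul {x : Fin m → R} {y : R}
    (h : Unimodular (Fin.snoc x y : Fin (m + 1) → R)) (u : Fin m → R) :
    Unimodular (Fin.snoc (fun i => x i + u i * y) y : Fin (m + 1) → R) := by
  obtain ⟨a, r, ha⟩ := unimodular_snoc_iff.1 h
  refine unimodular_snoc_iff.2 ⟨a, r - a ⬝ᵥ u, ?_⟩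
  rw [dotProduct_add_mul_const, ← ha]
  noncomm_ring

theorem Reducible.of_snoc_add_mul {x u : Fin m → R} {y : R}
    (h : Reducible (Fin.snoc (fun i => x i + u i * y) y : Fin (m + 1) → R)) :
    Reducible (Fin.snoc x y : Fin (m + 1) → R) := by
  obtain ⟨v, hv⟩ := reducible_snoc_iff.1 h
  exact reducible_snoc_iff.2 ⟨u + v, by simpa only [Pi.add_apply, add_mul, add_assoc] using hv⟩

theorem Reducible.of_snoc_mul {x : Fin m → R} {y z : R}
    (h : Reducible (Fin.snoc x (z * y) : Fin (m + 1) → R)) :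
    Reducible (Fin.snoc x y : Fin (m + 1) → R) := by
  obtain ⟨v, hv⟩ := reducible_snoc_iff.1 h
  exact reducible_snoc_iff.2 ⟨fun i => v i * z, by simpa only [mul_assoc] using hv⟩

theorem Reducible.of_snoc_mulVec {M : Matrix (Fin m) (Fin m) R} (hM : IsUnit M) {x : Fin m → R}
    {y : R} (h : Reducible (Fin.snoc (M *ᵥ x) y : Fin (m + 1) → R)) :
    Reducible (Fin.snoc x y : Fin (m + 1) → R) := by
  obtain ⟨U, rfl⟩ := hM
  obtain ⟨v, hv⟩ := reducible_snoc_iff.1 h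
  refine reducible_snoc_iff.2 ⟨↑U⁻¹ *ᵥ v, Unimodular.of_mulVec (M := ↑U) ?_⟩
  rwa [mulVec_add_mul_const, mulVec_mulVec, Units.mul_inv, one_mulVec]

end Columns

section Relative

variable [Ring R] {I : TwoSidedIdeal R} {m : ℕ}

theorem RelUnimodular.unimodular {b : Fin (m + 1) → R} (h : RelUnimodular I b) : Unimodular b :=
  let ⟨_, _, a, _, _, ha⟩ := h
  ⟨a, ha⟩

theorem RelReducible.reducible {b : Fin (m + 2) → R} (h : RelReducible I b) : Reducible b :=
  let ⟨v, _, hv⟩ := h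
  ⟨v, hv.unimodular⟩

/-- Writing `1 = a₀ x₀ + s` with `s ∈ I`, the coefficients `((1 + s) a₀, s aᵢ)` give
`(1 + s)(1 - s) + s² = 1`. -/
theorem Unimodular.relUnimodular {x : Fin (m + 1) → R} (h : Unimodular x) (h0 : x 0 - 1 ∈ I)
    (hI : ∀ i, i ≠ 0 → x i ∈ I) : RelUnimodular I x := by
  refine ⟨h0, hI, ?_⟩
  obtain ⟨a, ha⟩ := h
  rw [Fin.sum_univ_succ] at ha
  set s := ∑ i : Fin m, a i.succ * x i.succ
  have hs : s ∈ I := sum_mem fun i _ => I.mul_mem_left _ _ (hI _ i.succ_ne_zero)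
  have hax : a 0 * x 0 = 1 - s := eq_sub_of_add_eq ha
  refine ⟨Fin.cons ((1 + s) * a 0) fun i => s * a i.succ, ?_, fun i hi => ?_, ?_⟩
  · have hsplit : (1 + s) * a 0 - 1 = s * a 0 - a 0 * (x 0 - 1) + (a 0 * x 0 + s - 1) - s := by
      noncomm_ring
    rw [Fin.cons_zero, hsplit, ha, sub_self, add_zero]
    exact I.sub_mem (I.sub_mem (I.mul_mem_right _ _ hs) (I.mul_mem_left _ _ h0)) hs
  · obtain ⟨j, rfl⟩ := Fin.exists_succ_eq.2 hi
    simpa using I.mul_mem_right _ _ hs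
  · simp only [Fin.sum_univ_succ, Fin.cons_zero, Fin.cons_succ, mul_assoc, ← Finset.mul_sum]
    rw [hax]
    noncomm_ring

theorem reducible_snoc_of_relSRleq {n : ℕ} (hI : RelSRleq I n) (hn : n ≤ m + 1)
    {d : Fin (m + 1) → R} {y : R} (hd0 : d 0 - 1 ∈ I) (hd : ∀ i, i ≠ 0 → d i ∈ I)
    (h : Unimodular (Fin.snoc d y : Fin (m + 2) → R)) :
    Reducible (Fin.snoc d y : Fin (m + 2) → R) := by
  obtain ⟨α, r, hαr⟩ := unimodular_snoc_iff.1 h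
  have h1d0 : 1 - d 0 ∈ I := by simpa using I.neg_mem hd0
  have hX : Unimodular (Fin.snoc d ((1 - d 0) * r * y) : Fin (m + 2) → R) := by
    refine unimodular_snoc_iff.2 ⟨Pi.single 0 1 + (1 - d 0) • α, 1, ?_⟩
    rw [add_dotProduct, single_dotProduct, smul_dotProduct, smul_eq_mul,
      eq_sub_of_add_eq hαr]
    noncomm_ring
  refine (hI m hn _ (hX.relUnimodular ?_ fun i hi => ?_)).reducible.of_snoc_mul
    (z := (1 - d 0) * r)
  · change (Fin.snoc d _ : Fin (m + 2) → R) (Fin.castSucc 0) - 1 ∈ I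
    rwa [Fin.snoc_castSucc]
  · rcases Fin.eq_castSucc_or_eq_last i with ⟨j, rfl⟩ | rfl
    · simpa using hd j (by rintro rfl; exact hi rfl)
    · simpa [mul_assoc] using I.mul_mem_right _ _ h1d0

end Relative

section Extension

variable {A B : Type*} [Ring A] [Ring B] (f : B →+* A)

theorem Unimodular.map {m : ℕ} {b : Fin m → B} (h : Unimodular b) : Unimodular (f ∘ b) :=
  let ⟨a, ha⟩ := h
  ⟨f ∘ a, by rw [← map_one f, ← ha]; exact (RingHom.map_dotProduct f a b).symm⟩

theorem Reducible.map {m : ℕ} {b : Fin (m + 1) → B} (h : Reducible b) : Reducible (f ∘ b) :=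
  let ⟨v, hv⟩ := h
  ⟨f ∘ v, by simpa [Function.comp_def] using hv.map f⟩

variable {f}

theorem SRleq.of_surjective (hf : Function.Surjective f) {k : ℕ} (h : SRleq B k) : SRleq A k := by
  intro m hm b hb
  obtain ⟨b, rfl⟩ := hf.comp_left b
  obtain ⟨a, ha⟩ := hb
  obtain ⟨a, rfl⟩ := hf.comp_left a
  have hs : f (a ⬝ᵥ b) = 1 := by rw [RingHom.map_dotProduct]; exact ha
  obtain ⟨v, hv⟩ := reducible_snoc_iff.1 <| h (m + 1) (by omega) (Fin.snoc b (1 - a ⬝ᵥ b))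
    (unimodular_snoc_iff.2 ⟨a, 1, by noncomm_ring⟩)
  have hfv : f ∘ (fun i => b i + v i * (1 - a ⬝ᵥ b)) = f ∘ b := by
    funext i
    simp [hs]
  simpa [hfv] using (h m hm _ hv).map f

theorem sr_le_sr_of_surjective (hf : Function.Surjective f) : sr A ≤ sr B :=
  le_sInf fun _ ⟨_, hc, hk⟩ => hc ▸ sr_le_iff.2 (hk.of_surjective hf)

theorem IsElemMat.exists_isUnit_mapMatrix_eq (hf : Function.Surjective f) {t : ℕ}
    {M : Matrix (Fin t) (Fin t) A} (hM : IsElemMat M) :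
    ∃ E, IsUnit E ∧ f.mapMatrix E = M := by
  obtain ⟨i, j, c, hij, rfl⟩ := hM
  obtain ⟨d, rfl⟩ := hf c
  refine ⟨1 + single i j d, IsNilpotent.isUnit_one_add ⟨2, ?_⟩,
    by rw [map_add, map_one, RingHom.mapMatrix_apply, map_single]⟩
  rw [pow_two, single_mul_single_of_ne (c := d) i j i hij.symm]

theorem exists_isUnit_mapMatrix_eq_prod (hf : Function.Surjective f) {t : ℕ}
    {L : List (Matrix (Fin t) (Fin t) A)} (hL : ∀ M ∈ L, IsElemMat M) :
    ∃ E, IsUnit E ∧ f.mapMatrix E = L.prod := by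
  have : L.prod ∈ (IsUnit.submonoid _).map f.mapMatrix :=
    list_prod_mem fun M hM => (hL M hM).exists_isUnit_mapMatrix_eq hf
  simpa [IsUnit.mem_submonoid_iff] using this

theorem ERleq.exists_isUnit_map_mulVec_eq_single (hf : Function.Surjective f) {k m : ℕ}
    (hA : ERleq A k) (hk : k ≤ m) {c : Fin (m + 1) → B} (hc : Unimodular (f ∘ c)) :
    ∃ E : Matrix (Fin (m + 1)) (Fin (m + 1)) B,
      IsUnit E ∧ f ∘ (E *ᵥ c) = Pi.single 0 1 := by
  obtain ⟨L, hL, hLc⟩ :=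
    hA (m + 1) (by omega) _ (Pi.single 0 1) hc ⟨Pi.single 0 1, by simp [Pi.single_apply]⟩
  obtain ⟨E, hE, hEL⟩ := exists_isUnit_mapMatrix_eq_prod hf hL
  refine ⟨E, hE, ?_⟩
  rw [← hLc, ← hEL]
  exact funext (RingHom.map_mulVec f E c)

theorem SRleq.of_extension (hf : Function.Surjective f) {n : ℕ} (hn : 1 ≤ n) (hA : SRleq A n)
    (hE : ERleq A (n - 1)) (hI : RelSRleq (TwoSidedIdeal.ker f) n) : SRleq B n := by
  intro m hm b hb
  obtain ⟨m, rfl⟩ : ∃ m', m = m' + 1 := ⟨m - 1, by omega⟩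
  rw [← Fin.snoc_init_self b] at hb ⊢
  set x := Fin.init b
  set y := b (Fin.last _)
  obtain ⟨u, hu⟩ : ∃ u : Fin (m + 1) → B, Unimodular (f ∘ fun i => x i + u i * y) := by
    have hAb := hA (m + 1) hm _ (hb.map f)
    rw [Fin.comp_snoc] at hAb
    obtain ⟨v, hv⟩ := reducible_snoc_iff.1 hAb
    obtain ⟨u, rfl⟩ := hf.comp_left v
    exact ⟨u, by simpa [Function.comp_def] using hv⟩
  obtain ⟨E, hE, hEc⟩ := hE.exists_isUnit_map_mulVec_eq_single hf (by omega) hu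
  refine .of_snoc_add_mul <| .of_snoc_mulVec hE <|
    reducible_snoc_of_relSRleq hI (by omega) ?_ (fun i hi => ?_)
      ((hb.snoc_add_mul u).snoc_mulVec hE)
  · rw [TwoSidedIdeal.mem_ker, map_sub, map_one, ← Function.comp_apply (f := f), hEc]
    simp
  · rw [TwoSidedIdeal.mem_ker, ← Function.comp_apply (f := f), hEc, Pi.single_eq_of_ne hi]

end Extension

/-- Lemma 1.8(1): if `A` has stable rank `n` and elementary rank at most `n - 1`, then for any
unital extension `0 → I → B → A → 0` with `sr(I) ≤ n` (relative stable rank of the kernel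
ideal), the stable rank of `B` equals `n`. -/
theorem sr_closed_by_extensions
    {A B : Type*} [Ring A] [Ring B] (n : ℕ) (hn : 1 ≤ n)
    (hsr : sr A = n) (her : er A ≤ ((n - 1 : ℕ) : ℕ∞))
    (f : B →+* A) (hf : Function.Surjective f)
    (hI : RelSRleq (TwoSidedIdeal.ker f) n) :
    sr B = n :=
  le_antisymm (sr_le_iff.2 (.of_extension hf hn (sr_le_iff.1 hsr.le) (er_le_iff.1 her) hI))
    (hsr ▸ sr_le_sr_of_surjective hf)
end

section
/- The Laurent polynomial ring K[z, z⁻¹] over a field K has Bass stable rank equal to 2. -/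
open scoped BigOperators

variable {R : Type*}

/-!
`K[T;T⁻¹]` is a localization of `K[X]`, hence a principal ideal domain. In such a ring, for
`d ≠ 0` and `(d, b, c)` unimodular, let `v` generate the stable colon ideal `(d : b^∞)`: then
`d ∣ v bᴺ` and `v` is coprime to `b`, so a maximal ideal containing `d` and `b + v c` would contain
`b` and `c` too. Hence `(d, b + v c)` is unimodular, and taking for `d` a generator of the ideal of
the middle entries shortens every unimodular column of length at least three.

The units of `K[T;T⁻¹]` are the `c Tⁿ`, which satisfy `T u' = n u`. If `p + v (X - 1)⁴` were a
unit, clearing denominators and differentiating would give `(X - 1)³ ∣ X p' + n p` for some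
`n ∈ K`. For `p = 1 + (X - 1)² + (X - 1)³` this forces `n = 0`, `2 = 0` and `5 + n = 0`, which is
impossible; yet `p` and `(X - 1)⁴` are coprime, so `(p, (X - 1)⁴)` cannot be shortened.
-/

open Polynomial

theorem IsLocalization.isPrincipalIdealRing {R S : Type*} [CommRing R] [CommRing S] [Algebra R S]
    (M : Submonoid R) [IsLocalization M S] [IsPrincipalIdealRing R] : IsPrincipalIdealRing S where
  principal J := by
    obtain ⟨g, hg⟩ := IsPrincipalIdealRing.principal (J.under R)
    refine ⟨algebraMap R S g, ?_⟩
    rw [← IsLocalization.map_under M S J, hg, Ideal.submodule_span_eq, Ideal.map_span,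
      Set.image_singleton, Ideal.submodule_span_eq]

instance (K : Type*) [Field K] : IsPrincipalIdealRing (LaurentPolynomial K) :=
  IsLocalization.isPrincipalIdealRing (Submonoid.powers (X : K[X]))

theorem SRleq.mono [Ring R] {n m : ℕ} (h : SRleq R n) (hnm : n ≤ m) : SRleq R m :=
  fun k hk => h k (hnm.trans hk)

theorem sr_eq_of_srleq_of_not_srleq [Ring R] {n : ℕ} (h : SRleq R (n + 1)) (h' : ¬ SRleq R n) :
    sr R = (n + 1 : ℕ) := by
  refine le_antisymm (sInf_le ⟨n + 1, rfl, h⟩) (le_sInf ?_)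
  rintro _ ⟨m, rfl, hm⟩
  by_contra! hlt
  exact h' (hm.mono (Nat.lt_succ_iff.mp (by exact_mod_cast hlt)))

section CommRing

variable {A : Type*} [CommRing A]

theorem unimodular_iff_span_range_eq_top {m : ℕ} (b : Fin m → A) :
    Unimodular b ↔ Ideal.span (Set.range b) = ⊤ := by
  rw [Ideal.eq_top_iff_one, Ideal.mem_span_range_iff_exists_fun]
  rfl

theorem unimodular_pair_iff {x y : A} : Unimodular ![x, y] ↔ IsCoprime x y := by
  simp [Unimodular, IsCoprime, Fin.exists_fin_succ_pi]

theorem reducible_pair_iff {x y : A} : Reducible ![x, y] ↔ ∃ v, IsUnit (x + v * y) := by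
  simp [Reducible, Unimodular, isUnit_iff_exists_inv', Fin.exists_fin_succ_pi]

theorem isCoprime_iff_span_pair_eq_top {x y : A} : IsCoprime x y ↔ Ideal.span {x, y} = ⊤ := by
  rw [Ideal.eq_top_iff_one, Ideal.mem_span_pair]
  rfl

theorem isCoprime_add_mul_of_dvd_mul_pow {d b c v : A} {N : ℕ} (hdvd : d ∣ v * b ^ N)
    (hvb : IsCoprime v b) (hdbc : Ideal.span {d, b, c} = ⊤) : IsCoprime d (b + v * c) := by
  by_contra h
  obtain ⟨M, hM, hle⟩ := Ideal.exists_le_maximal _ (mt isCoprime_iff_span_pair_eq_top.mpr h)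
  have proper : ∀ s : Set A, Ideal.span s = ⊤ → ¬ s ⊆ M := fun s hs hsM =>
    hM.ne_top (top_le_iff.mp (hs ▸ Ideal.span_le.mpr hsM))
  have hd : d ∈ M := hle (Ideal.subset_span (by simp))
  have hw : b + v * c ∈ M := hle (Ideal.subset_span (by simp))
  have hv : v ∉ M := by
    intro hv
    have hb : b ∈ M := add_sub_cancel_right b (v * c) ▸ M.sub_mem hw (M.mul_mem_right c hv)
    exact proper _ (isCoprime_iff_span_pair_eq_top.mp hvb) (Set.pair_subset hv hb)
  have hb : b ∈ M := hM.isPrime.mem_of_pow_mem N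
    ((hM.isPrime.mem_or_mem (Ideal.mem_of_dvd _ hdvd hd)).resolve_left hv)
  have hc : c ∈ M := (hM.isPrime.mem_or_mem
    (add_sub_cancel_left b (v * c) ▸ M.sub_mem hw hb)).resolve_left hv
  exact proper _ hdbc (Set.insert_subset hd (Set.pair_subset hb hc))

end CommRing

section PrincipalIdealDomain

variable {A : Type*} [CommRing A] [IsDomain A] [IsPrincipalIdealRing A]

theorem exists_dvd_mul_pow_isCoprime {d : A} (hd : d ≠ 0) (b : A) :
    ∃ (v : A) (N : ℕ), d ∣ v * b ^ N ∧ IsCoprime v b := by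
  have mem : ∀ n x, x ∈ (Ideal.span {d}).colon {b ^ n} ↔ d ∣ x * b ^ n := by
    simp [Submodule.mem_colon_singleton, Ideal.mem_span_singleton]
  let colon : ℕ →o Ideal A := ⟨fun n => (Ideal.span {d}).colon {b ^ n},
    monotone_nat_of_le_succ fun n x hx => by
      rw [mem] at hx ⊢
      rw [pow_succ, ← mul_assoc]
      exact hx.mul_right b⟩
  replace mem : ∀ n x, x ∈ colon n ↔ d ∣ x * b ^ n := mem
  obtain ⟨N, hN⟩ := monotone_stabilizes_iff_noetherian.mpr inferInstance colon
  set v := Submodule.IsPrincipal.generator (colon N)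
  have hv_dvd : ∀ x, x ∈ colon N ↔ v ∣ x := fun _ =>
    Submodule.IsPrincipal.mem_iff_generator_dvd _
  have hdv : d ∣ v * b ^ N := (mem N v).mp (Submodule.IsPrincipal.generator_mem _)
  have hv0 : v ≠ 0 := by
    intro hv
    obtain ⟨r, hr⟩ := (hv_dvd d).mp ((mem N d).mpr (dvd_mul_right d _))
    exact hd (by rw [hr, hv, zero_mul])
  refine ⟨v, N, hdv, IsRelPrime.isCoprime fun e ⟨v', hv'⟩ ⟨b', hb'⟩ => ?_⟩
  -- `v / e` already lies in the stable colon ideal, so `v ∣ v / e`.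
  have hv'mem : v' ∈ colon N := by
    rw [hN (N + 1) N.le_succ, mem]
    refine (hdv.mul_right b').trans ⟨1, ?_⟩
    rw [pow_succ, hv']
    nth_rw 2 [hb']
    ring
  obtain ⟨r, hr⟩ := (hv_dvd v').mp hv'mem
  have hv'0 : v' ≠ 0 := by rintro rfl; exact hv0 (by rw [hv', mul_zero])
  exact IsUnit.of_mul_eq_one r (mul_left_cancel₀ hv'0 (by linear_combination -r * hv' - hr))

theorem exists_isCoprime_add_mul {d b c : A} (hd : d ≠ 0) (h : Ideal.span {d, b, c} = ⊤) :
    ∃ v, IsCoprime d (b + v * c) := by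
  obtain ⟨v, N, hdvd, hvb⟩ := exists_dvd_mul_pow_isCoprime hd b
  exact ⟨v, isCoprime_add_mul_of_dvd_mul_pow hdvd hvb h⟩

variable (A) in
theorem srleq_two_of_isPrincipalIdealRing : SRleq A 2 := by
  intro m hm b hb
  obtain ⟨k, rfl⟩ := Nat.exists_eq_add_of_le' hm
  rw [unimodular_iff_span_range_eq_top] at hb
  simp_rw [Reducible, unimodular_iff_span_range_eq_top]
  set c := b (Fin.last (k + 2))
  set I := Ideal.span (Set.range fun i : Fin (k + 1) => b i.succ.castSucc)
  have span_le : ∀ J : Ideal A, b 0 ∈ J → c ∈ J → I ≤ J → Ideal.span (Set.range b) ≤ J := by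
    intro J h0 hc hI
    rw [Ideal.span_le, Set.range_subset_iff]
    intro j
    induction j using Fin.lastCases with
    | last => exact hc
    | cast i =>
      induction i using Fin.cases with
      | zero => exact h0
      | succ i => exact hI (Ideal.subset_span ⟨i, rfl⟩)
  by_cases hI : I = ⊥
  · -- the middle entries vanish, so `(b 0, c)` is unimodular: move `c` into slot `1`
    have hb1 : b 1 = 0 := by
      rw [← Ideal.mem_bot, ← hI]
      exact Ideal.subset_span ⟨0, by simp⟩
    refine ⟨Pi.single 1 1, top_le_iff.mp (hb ▸ span_le _ ?_ ?_ (hI ▸ bot_le))⟩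
    · exact Ideal.subset_span ⟨0, by simp⟩
    · exact Ideal.subset_span ⟨1, by simp [hb1, c]⟩
  · set d := Submodule.IsPrincipal.generator I
    have hd : d ≠ 0 := mt (Submodule.IsPrincipal.eq_bot_iff_generator_eq_zero I).mpr hI
    have hId : I = Ideal.span {d} := (Ideal.span_singleton_generator I).symm
    have hdbc : Ideal.span {d, b 0, c} = ⊤ := by
      refine top_le_iff.mp (hb ▸ span_le _ ?_ ?_ ?_)
      · exact Ideal.subset_span (by simp)
      · exact Ideal.subset_span (by simp)
      · rw [hId]
        exact Ideal.span_mono (by simp)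
    obtain ⟨v, hv⟩ := exists_isCoprime_add_mul hd hdbc
    refine ⟨Pi.single 0 v, top_le_iff.mp ?_⟩
    rw [← isCoprime_iff_span_pair_eq_top.mp hv, Ideal.span_le]
    refine Set.pair_subset ?_ (Ideal.subset_span ⟨0, by simp⟩)
    refine Ideal.span_le.mpr ?_ (Submodule.IsPrincipal.generator_mem I)
    exact Set.range_subset_iff.mpr fun i => Ideal.subset_span ⟨i.succ, by simp⟩

end PrincipalIdealDomain

section LogDerivative

variable {R : Type*} [CommRing R]

theorem X_mul_derivative_X_pow (n : ℕ) : X * derivative (X ^ n : R[X]) = C (n : R) * X ^ n := by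
  cases n with
  | zero => simp
  | succ n => rw [derivative_X_pow_succ, pow_succ]; push_cast; ring

theorem pow_dvd_X_mul_derivative_add_C_mul {p w : R[X]} {c : R} {s t k : ℕ}
    (h : p * X ^ s + w * (X - 1) ^ (k + 1) = C c * X ^ t) :
    (X - 1) ^ k ∣ X * derivative p + C ((s : R) - t) * p := by
  have hd := congrArg (fun f => X * derivative f) h
  simp only [derivative_add, derivative_mul, derivative_C, zero_mul, zero_add] at hd
  have hq : derivative ((X - 1 : R[X]) ^ (k + 1)) = C ((k + 1 : ℕ) : R) * (X - 1) ^ k := by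
    simp [derivative_pow]
  have key : X ^ s * (X * derivative p + C ((s : R) - t) * p) = (X - 1) ^ k *
      (C (t : R) * w * (X - 1) - X * derivative w * (X - 1) - C ((k + 1 : ℕ) : R) * X * w) := by
    rw [C_sub]
    linear_combination hd - p * X_mul_derivative_X_pow (R := R) s
      + C c * X_mul_derivative_X_pow (R := R) t - C (t : R) * h - X * w * hq
  have hcop : IsCoprime (X - 1 : R[X]) X := ⟨-1, 1, by ring⟩
  exact (hcop.pow (m := k) (n := s)).dvd_of_dvd_mul_left ⟨_, key⟩

theorem not_X_sub_one_pow_three_dvd [Nontrivial R] (n : R) :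
    ¬ (X - 1) ^ 3 ∣ X * derivative (1 + (X - 1) ^ 2 + (X - 1) ^ 3 : R[X]) +
      C n * (1 + (X - 1) ^ 2 + (X - 1) ^ 3) := by
  intro h
  have e : aeval (X + 1 : R[X]) (X * derivative (1 + (X - 1) ^ 2 + (X - 1) ^ 3 : R[X]) +
      C n * (1 + (X - 1) ^ 2 + (X - 1) ^ 3)) =
      C n + C 2 * X + C (5 + n) * X ^ 2 + C (3 + n) * X ^ 3 := by
    simp only [derivative_one, derivative_pow, Nat.cast_ofNat, map_ofNat,
      Nat.add_one_sub_one, pow_one, derivative_sub, derivative_X, sub_zero, mul_one, zero_add,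
      map_add, map_mul, aeval_X, aeval_sub, map_one, add_sub_cancel_right, map_pow, aeval_C,
      algebraMap_eq]
    ring
  have hcoeff := map_dvd (aeval (X + 1 : R[X])) h
  rw [e, map_pow, map_sub, aeval_X, map_one, add_sub_cancel_right, X_pow_dvd_iff] at hcoeff
  have h0 := hcoeff 0 (by norm_num)
  have h1 := hcoeff 1 (by norm_num)
  have h2 := hcoeff 2 (by norm_num)
  simp only [coeff_add, coeff_C_mul, coeff_C, coeff_X_pow, coeff_X] at h0 h1 h2
  norm_num at h0 h1 h2
  exact one_ne_zero (by linear_combination h2 - h0 - 2 * h1 : (1 : R) = 0)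

end LogDerivative

namespace LaurentPolynomial

variable {K : Type*} [Field K]

theorem exists_C_mul_T_of_isUnit {f : K[T;T⁻¹]} (hf : IsUnit f) :
    ∃ (c : K) (n : ℤ), f = C c * T n := by
  obtain ⟨g, hfg⟩ := hf.exists_right_inv
  obtain ⟨a, p, hp⟩ := exists_T_pow f
  obtain ⟨b, q, hq⟩ := exists_T_pow g
  have hpq : p * q = X ^ (a + b) := Polynomial.toLaurent_injective <| by
    rw [map_mul, hp, hq, Polynomial.toLaurent_X_pow, Nat.cast_add, T_add]
    linear_combination (T a * T b) * hfg
  obtain ⟨i, -, u, hu⟩ := (dvd_prime_pow Polynomial.prime_X _).mp ⟨q, hpq.symm⟩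
  obtain ⟨r, -, hr⟩ := Polynomial.isUnit_iff.mp (u⁻¹).isUnit
  refine ⟨r, i - a, ?_⟩
  have hpX : p = X ^ i * Polynomial.C r := by rw [hr, ← hu, Units.mul_inv_cancel_right]
  calc f = Polynomial.toLaurent p * T (-a) := by rw [hp, mul_assoc, ← T_add]; simp
    _ = C r * T (i - a) := by
      rw [hpX, map_mul, Polynomial.toLaurent_X_pow, Polynomial.toLaurent_C, T_sub]; ring

theorem exists_mul_X_pow_add_mul_eq_C_mul_X_pow_of_isUnit {p q : K[X]} {v : K[T;T⁻¹]}
    (hu : IsUnit (Polynomial.toLaurent p + v * Polynomial.toLaurent q)) :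
    ∃ (w : K[X]) (c : K) (s t : ℕ), p * X ^ s + w * q = Polynomial.C c * X ^ t := by
  obtain ⟨c, n, hcn⟩ := exists_C_mul_T_of_isUnit hu
  obtain ⟨k, w, hw⟩ := exists_T_pow v
  refine ⟨w * X ^ n.natAbs, c, k + n.natAbs, (n + k + n.natAbs).toNat,
    Polynomial.toLaurent_injective ?_⟩
  simp only [map_add, map_mul, Polynomial.toLaurent_X_pow, Polynomial.toLaurent_C, hw]
  rw [Int.toNat_of_nonneg (by omega)]
  calc _ = (Polynomial.toLaurent p + v * Polynomial.toLaurent q) * T (k + n.natAbs : ℕ) := by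
        push_cast; rw [T_add]; ring
    _ = C c * T (n + k + n.natAbs) := by
        rw [hcn, mul_assoc, ← T_add]; push_cast; ring_nf

theorem not_isUnit_toLaurent_add_mul {p : K[X]} {k : ℕ}
    (hp : ∀ n : K, ¬ (X - 1) ^ k ∣ X * derivative p + Polynomial.C n * p) (v : K[T;T⁻¹]) :
    ¬ IsUnit (Polynomial.toLaurent p + v * Polynomial.toLaurent ((X - 1) ^ (k + 1))) := by
  intro hu
  obtain ⟨w, c, s, t, h⟩ := exists_mul_X_pow_add_mul_eq_C_mul_X_pow_of_isUnit hu
  exact hp _ (pow_dvd_X_mul_derivative_add_C_mul h)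

variable (K) in
theorem not_srleq_one : ¬ SRleq K[T;T⁻¹] 1 := by
  intro h
  let p : K[X] := 1 + (X - 1) ^ 2 + (X - 1) ^ 3
  have hpq : IsCoprime p ((X - 1) ^ 4) := ⟨1 - (X - 1) ^ 2 * X, X ^ 2, by ring⟩
  obtain ⟨v, hv⟩ := reducible_pair_iff.mp
    (h 1 le_rfl _ (unimodular_pair_iff.mpr (hpq.map Polynomial.toLaurent)))
  exact not_isUnit_toLaurent_add_mul not_X_sub_one_pow_three_dvd v hv

end LaurentPolynomial

/-- The Laurent polynomial ring `K[z, z⁻¹]` over a field has Bass stable rank `2`. -/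
theorem sr_laurent_eq_two (K : Type*) [Field K] :
    sr (LaurentPolynomial K) = 2 :=
  sr_eq_of_srleq_of_not_srleq (srleq_two_of_isPrincipalIdealRing _)
    (LaurentPolynomial.not_srleq_one K)
end

section
/- In the Laurent polynomial ring ℂ[z, z⁻¹], the pair (1+z, 1+z²) generates the unit ideal, but there is no element v ∈ ℂ[z, z⁻¹] such that (1+z) + v·(1+z²) is invertible in ℂ[z, z⁻¹]. -/
/-!
Since `(1 - z)(1 + z) + (1 + z²) = 2`, the pair is unimodular. Over a domain the units of
`R[T;T⁻¹]` are the monomials `c·Tⁿ`, because a divisor of `Xᵏ` in `R[X]` is `c·Xⁱ`; such a monomial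
takes values at `x` and `-x` that agree up to sign. But `1 + z²` vanishes at `±i`, so
`(1 + z) + v·(1 + z²)` takes the values `1 + i` and `1 - i` there, which are not `±` each other.
-/

open LaurentPolynomial

namespace Polynomial

theorem exists_eq_C_mul_X_pow_of_dvd_X_pow {R : Type*} [CommRing R] [IsDomain R] {p : R[X]}
    {k : ℕ} (hp : p ∣ X ^ k) : ∃ (c : R) (i : ℕ), p = C c * X ^ i := by
  obtain ⟨i, -, hpX⟩ := (dvd_prime_pow prime_X k).mp hp
  obtain ⟨w, hw⟩ := hpX.symm
  obtain ⟨c, -, hc⟩ := Polynomial.isUnit_iff.mp w.isUnit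
  exact ⟨c, i, by rw [← hw, ← hc, mul_comm]⟩

end Polynomial

namespace LaurentPolynomial

variable {R : Type*} [CommRing R] [IsDomain R]

open Polynomial in
theorem exists_eq_C_mul_T_of_isUnit {f : R[T;T⁻¹]} (hf : IsUnit f) :
    ∃ (c : R) (n : ℤ), f = C c * T n := by
  obtain ⟨g, hfg⟩ := hf.exists_right_inv
  obtain ⟨m, p, hp⟩ := exists_T_pow f
  obtain ⟨n, q, hq⟩ := exists_T_pow g
  have hpq : p * q = X ^ (m + n) := by
    apply toLaurent_injective
    rw [map_mul, hp, hq, toLaurent_X_pow, mul_mul_mul_comm, hfg, one_mul, ← T_add]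
    push_cast; rfl
  obtain ⟨c, i, rfl⟩ := exists_eq_C_mul_X_pow_of_dvd_X_pow (Dvd.intro q hpq)
  refine ⟨c, i - m, ?_⟩
  rw [map_mul, toLaurent_C, toLaurent_X_pow] at hp
  rw [T_sub, ← mul_assoc, hp, mul_assoc, ← T_add, add_neg_cancel, T_zero, mul_one]

theorem eval₂_neg_eq_or_of_isUnit {S : Type*} [CommRing S] (φ : R →+* S) (x : Sˣ)
    {f : R[T;T⁻¹]} (hf : IsUnit f) :
    eval₂ φ (-x) f = eval₂ φ x f ∨ eval₂ φ (-x) f = -eval₂ φ x f := by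
  obtain ⟨c, n, rfl⟩ := exists_eq_C_mul_T_of_isUnit hf
  simp only [eval₂_C_mul_T]
  rcases n.even_or_odd with hn | hn
  · left; rw [hn.neg_zpow]
  · right; rw [hn.neg_zpow, Units.val_neg, mul_neg]

end LaurentPolynomial

/-- In `ℂ[z, z⁻¹]`, the pair `(1 + z, 1 + z²)` generates the unit ideal, yet no element `v`
makes `(1 + z) + v·(1 + z²)` invertible. -/
theorem laurent_unimodular_pair_not_reducible :
    (∃ a b : LaurentPolynomial ℂ, a * (1 + T 1) + b * (1 + T 2) = 1) ∧
    ¬ ∃ v : LaurentPolynomial ℂ, IsUnit ((1 + T 1) + v * (1 + T 2)) := by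
  constructor
  · refine ⟨C 2⁻¹ * (1 - T 1), C 2⁻¹, ?_⟩
    have hT : (T 1 * T 1 : ℂ[T;T⁻¹]) = T 2 := by rw [← T_add]; rfl
    have h2 : (C 2⁻¹ * 2 : ℂ[T;T⁻¹]) = 1 := by
      rw [← map_ofNat C 2, ← map_mul, inv_mul_cancel₀ two_ne_zero, map_one]
    linear_combination (-C 2⁻¹) * hT + h2
  · rintro ⟨v, hv⟩
    have eval_at : ∀ x : ℂˣ, (x : ℂ) ^ 2 = -1 →
        eval₂ (RingHom.id ℂ) x ((1 + T 1) + v * (1 + T 2)) = 1 + x := by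
      intro x hx
      simp [hx]
    let i : ℂˣ := Units.mk0 Complex.I Complex.I_ne_zero
    have key := eval₂_neg_eq_or_of_isUnit (RingHom.id ℂ) i hv
    rw [eval_at i (by simp [i]), eval_at (-i) (by simp [i])] at key
    simp only [Units.val_neg, i, Units.val_mk0] at key
    rcases key with h | h
    · exact Complex.I_ne_zero (by linear_combination -h / 2)
    · exact two_ne_zero (α := ℂ) (by linear_combination h)
end

section
/- Let E be a directed graph with isolated cycles. Then every closed simple path in E is a cycle, i.e., has pairwise distinct source vertices s(μ_i). -/
/-- A directed graph `E = (E⁰, E¹, s, r)`. -/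
structure DGraph where
  V : Type
  E : Type
  s : E → V
  r : E → V

namespace DGraph

variable (G : DGraph)

/-- A list of edges forms a path if consecutive edges are composable. -/
def IsPath (p : List G.E) : Prop := p.Chain' (fun e f => G.r e = G.s f)

/-- A closed simple path based at `v`: a nonempty path starting and ending at `v` such that
no intermediate edge has source `v`. -/
def IsClosedSimplePath (v : G.V) (p : List G.E) : Prop :=
  p ≠ [] ∧ G.IsPath p ∧
    (∀ h : p ≠ [], G.s (p.head h) = v ∧ G.r (p.getLast h) = v) ∧
    ∀ i : Fin p.length, 0 < (i : ℕ) → G.s (p.get i) ≠ v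

/-- A cycle: a nonempty closed path all of whose edges have pairwise distinct sources. -/
def IsCycle (p : List G.E) : Prop :=
  p ≠ [] ∧ G.IsPath p ∧
    (∀ h : p ≠ [], G.r (p.getLast h) = G.s (p.head h)) ∧ (p.map G.s).Nodup

/-- The graph `G` has isolated cycles: whenever two closed simple paths share the source of
some of their edges, the corresponding edges coincide. -/
def IsolatedCycles : Prop :=
  ∀ v w (p q : List G.E), G.IsClosedSimplePath v p → G.IsClosedSimplePath w q →
    ∀ (i : Fin p.length) (j : Fin q.length),
      G.s (p.get i) = G.s (q.get j) → p.get i = q.get j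

/-- `v ≥ w` : there is a (possibly empty) finite directed path from `v` to `w`. -/
def Reaches : G.V → G.V → Prop :=
  Relation.ReflTransGen (fun a b => ∃ e : G.E, G.s e = a ∧ G.r e = b)

/-- The relation `C ≥ C'` on cycles: some vertex of `C` reaches some vertex of `C'`. -/
def CycleGE (p q : List G.E) : Prop :=
  ∃ v w : G.V, v ∈ p.map G.s ∧ w ∈ q.map G.s ∧ G.Reaches v w

end DGraph

open DGraph

/-! If two edges of a closed simple path `p` share their source, isolation forces them to be
equal, hence to have the same range, so the sources of the following edges agree as well.
Walking forward from a repetition `s p[i] = s p[j]` with `i < j` until the second copy reaches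
the last edge gives an edge `p[i + (p.length - 1 - j)]` ending at the base point `v`; the edge
after it is an intermediate edge with source `v`, which a closed simple path forbids. -/

namespace DGraph

variable {G : DGraph}

theorem IsPath.r_getElem_eq_s_getElem_succ {p : List G.E} (hp : G.IsPath p) {i : ℕ}
    (hi : i + 1 < p.length) : G.r p[i] = G.s p[i + 1] :=
  List.isChain_iff_getElem.mp hp i hi

theorem IsolatedCycles.injOn_s_of_isClosedSimplePath (hiso : G.IsolatedCycles) {v : G.V}
    {p : List G.E} (hp : G.IsClosedSimplePath v p) : Set.InjOn G.s {e | e ∈ p} := by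
  intro e he f hf hs
  obtain ⟨i, hi, rfl⟩ := List.mem_iff_getElem.mp he
  obtain ⟨j, hj, rfl⟩ := List.mem_iff_getElem.mp hf
  exact hiso v v p p hp hp ⟨i, hi⟩ ⟨j, hj⟩ hs

theorem IsPath.s_getElem_add_eq_of_injOn {p : List G.E} (hp : G.IsPath p)
    (hinj : Set.InjOn G.s {e | e ∈ p}) {i j : ℕ} {hi : i < p.length} {hj : j < p.length}
    (h : G.s p[i] = G.s p[j]) :
    ∀ (k : ℕ) (hik : i + k < p.length) (hjk : j + k < p.length),
      G.s p[i + k] = G.s p[j + k]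
  | 0, _, _ => h
  | k + 1, hik, hjk => by
    have hprev := hp.s_getElem_add_eq_of_injOn hinj h k (by omega) (by omega)
    have hedge : p[i + k] = p[j + k] :=
      hinj (List.getElem_mem _) (List.getElem_mem _) hprev
    calc G.s p[i + (k + 1)] = G.r p[i + k] := (hp.r_getElem_eq_s_getElem_succ _).symm
      _ = G.r p[j + k] := by rw [hedge]
      _ = G.s p[j + (k + 1)] := hp.r_getElem_eq_s_getElem_succ _

theorem IsClosedSimplePath.nodup_map_s_of_injOn {v : G.V} {p : List G.E}
    (hp : G.IsClosedSimplePath v p) (hinj : Set.InjOn G.s {e | e ∈ p}) :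
    (p.map G.s).Nodup := by
  obtain ⟨hne, hpath, hends, hmid⟩ := hp
  refine List.pairwise_iff_getElem.mpr fun i j hi hj hij hs => ?_
  simp only [List.length_map, List.getElem_map] at hi hj hs
  set k := p.length - 1 - j
  have hlast : G.s p[i + k] = G.s p[p.length - 1] := by
    simpa [k, show j + (p.length - 1 - j) = p.length - 1 by omega] using
      hpath.s_getElem_add_eq_of_injOn hinj hs k (by omega) (by omega)
  have hedge : p[i + k] = p[p.length - 1] :=
    hinj (List.getElem_mem _) (List.getElem_mem _) hlast
  have hr : G.r p[i + k] = v := by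
    rw [hedge, ← List.getLast_eq_getElem hne]
    exact (hends hne).2
  exact hmid ⟨i + k + 1, by omega⟩ (Nat.succ_pos _)
    ((hpath.r_getElem_eq_s_getElem_succ (by omega)).symm.trans hr)

end DGraph

/-- In a graph with isolated cycles, every closed simple path is a cycle: its edges have
pairwise distinct sources. -/
theorem closedSimplePath_isCycle_of_isolatedCycles
    (G : DGraph) (hiso : G.IsolatedCycles) (v : G.V) (p : List G.E)
    (hp : G.IsClosedSimplePath v p) : (p.map G.s).Nodup :=
  hp.nodup_map_s_of_injOn (hiso.injOn_s_of_isClosedSimplePath hp)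
end

section
/- There exists a direct limit of unital rings R_i with sr(R_i) = ∞ for all i (along non-unital inclusions) whose limit ring has stable rank 2; in particular, for a directed union R = ⋃ R_i of rings along non-unital embeddings, the inequality sr(R) ≤ liminf sr(R_i) can fail to be an equality, with strict inequality 2 < ∞. -/
open scoped BigOperators

variable {R : Type*}

/-- The canonical copy of a non-unital ring `B` as a two-sided ideal of its
`ℤ`-unitization. -/
def nuIdeal (B : Type*) [NonUnitalRing B] : TwoSidedIdeal (Unitization ℤ B) :=
  TwoSidedIdeal.mk' {x | x.fst = 0}
    (by simp)
    (fun hx hy => by simp_all)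
    (fun hx => by simp_all)
    (fun {x y} hy => by simp_all)
    (fun {x y} hx => by simp_all)

/-- The lift of a two-sided ideal of a non-unital ring `B` to a two-sided ideal of the
`ℤ`-unitization of `B`. -/
def liftIdeal {B : Type*} [NonUnitalRing B] (I : TwoSidedIdeal B) :
    TwoSidedIdeal (Unitization ℤ B) :=
  TwoSidedIdeal.mk' {x | x.fst = 0 ∧ x.snd ∈ I}
    ⟨by simp, by simpa using I.zero_mem⟩
    (fun hx hy => ⟨by simp [hx.1, hy.1], by simpa using I.add_mem hx.2 hy.2⟩)
    (fun hx => ⟨by simp [hx.1], by simpa using I.neg_mem hx.2⟩)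
    (fun {x y} hy => ⟨by simp [hy.1], by
        simp only [Unitization.snd_mul, hy.1, zero_smul, add_zero, Set.mem_setOf_eq]
        exact I.add_mem (I.zsmul_mem _ hy.2) (I.mul_mem_left _ _ hy.2)⟩)
    (fun {x y} hx => ⟨by simp [hx.1], by
        simp only [Unitization.snd_mul, hx.1, zero_smul, zero_add, Set.mem_setOf_eq]
        exact I.add_mem (I.zsmul_mem _ hx.2) (I.mul_mem_right _ _ hx.2)⟩)

/-- The Bass stable rank of a (possibly non-unital) ring, defined via Vaserstein's relative
stable rank of its canonical copy inside its `ℤ`-unitization. -/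
noncomputable def srNU (B : Type*) [NonUnitalRing B] : ℕ∞ := relSr (R := Unitization ℤ B) (nuIdeal B)

/-- Unimodular columns with entries in a subset `S` of `B`, where `e` plays the role of the
identity of `S`. -/
def UnimodularIn {B : Type*} [NonUnitalRing B] (S : Set B) (e : B) {m : ℕ}
    (b : Fin m → B) : Prop :=
  (∀ i, b i ∈ S) ∧ ∃ a : Fin m → B, (∀ i, a i ∈ S) ∧ ∑ i, a i * b i = e

def ReducibleIn {B : Type*} [NonUnitalRing B] (S : Set B) (e : B) {n : ℕ}
    (b : Fin (n + 1) → B) : Prop :=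
  ∃ v : Fin n → B, (∀ i, v i ∈ S) ∧
    UnimodularIn S e (fun i : Fin n => b i.castSucc + v i * b (Fin.last n))

/-- The stable range condition for the subring `S` of `B` with identity `e`. -/
def SRleqIn {B : Type*} [NonUnitalRing B] (S : Set B) (e : B) (n : ℕ) : Prop :=
  ∀ m : ℕ, n ≤ m → ∀ b : Fin (m + 1) → B, (∀ i, b i ∈ S) → UnimodularIn S e b →
    ReducibleIn S e b

/-- The Bass stable rank of the subring `S` of `B` with identity `e`. -/
noncomputable def srIn {B : Type*} [NonUnitalRing B] (S : Set B) (e : B) : ℕ∞ :=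
  sInf {c : ℕ∞ | ∃ n : ℕ, c = n ∧ SRleqIn S e n}

/-- A witness that stable rank can drop strictly in a non-unital direct limit: a non-unital
ring `B` which is the directed union of an increasing chain of subrings `S i`, each unital
(with identity `e i`) of infinite stable rank, while `B` itself has no identity and has
stable rank `2`. -/
structure SrDropExample where
  B : Type
  [instB : NonUnitalRing B]
  S : ℕ → NonUnitalSubring B
  mono : Monotone S
  union : ∀ x : B, ∃ i, x ∈ S i
  e : ℕ → B
  e_mem : ∀ i, e i ∈ S i
  e_unit : ∀ i, ∀ x ∈ S i, e i * x = x ∧ x * e i = x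
  not_unital : ¬ ∃ u : B, ∀ x : B, u * x = x ∧ x * u = x
  sr_top : ∀ i, srIn (S i : Set B) (e i) = ⊤
  sr_two : srNU B = 2

attribute [instance] SrDropExample.instB

set_option synthInstance.maxHeartbeats 400000
set_option maxHeartbeats 1000000

namespace SrDrop

abbrev UU : Type := (ℕ × ℕ) →₀ ℚ
abbrev EE : Type := Module.End ℚ UU

noncomputable def op (σ : ℕ × ℕ → Option (ℕ × ℕ)) : EE :=
  Finsupp.lsum ℚ fun p => Option.elim (σ p) 0 Finsupp.lsingle

lemma op_single (σ : ℕ × ℕ → Option (ℕ × ℕ)) (p : ℕ × ℕ) (c : ℚ) :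
    op σ (Finsupp.single p c) = Option.elim (σ p) 0 (fun q => Finsupp.single q c) := by
  rw [op, Finsupp.lsum_single]
  cases σ p <;> simp [Finsupp.lsingle_apply]

lemma op_mul (σ τ : ℕ × ℕ → Option (ℕ × ℕ)) :
    op σ * op τ = op (fun p => (τ p).bind σ) := by
  refine Finsupp.lhom_ext fun p c => ?_
  rw [Module.End.mul_apply, op_single, op_single]
  cases h : τ p <;> simp [op_single]

noncomputable def P (i : ℕ) : EE := op fun p => if p.1 ≤ i then some p else none

lemma P_mul_P {i j : ℕ} (h : i ≤ j) : P j * P i = P i := by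
  rw [P, P, op_mul]
  congr 1; funext p
  by_cases hp : p.1 ≤ i
  · simp [hp, hp.trans h]
  · simp [hp]

lemma P_mul_P' {i j : ℕ} (h : i ≤ j) : P i * P j = P i := by
  rw [P, P, op_mul]
  congr 1; funext p
  by_cases hp : p.1 ≤ i
  · simp [hp, hp.trans h]
  · by_cases hq : p.1 ≤ j <;> simp [hp, hq]

noncomputable def Sl (i : ℕ) : NonUnitalSubring EE where
  carrier := {f | P i * f = f ∧ f * P i = f}
  zero_mem' := by simp
  add_mem' := by
    intro a b ha hb
    exact ⟨by rw [mul_add, ha.1, hb.1], by rw [add_mul, ha.2, hb.2]⟩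
  neg_mem' := by
    intro a ha
    have h1 := fun x => DFunLike.congr_fun ha.1 x
    have h2 := fun x => DFunLike.congr_fun ha.2 x
    simp only [Module.End.mul_apply] at h1 h2
    constructor <;> ext x <;>
      simp [Module.End.mul_apply, LinearMap.neg_apply, map_neg, h1, h2]
  mul_mem' := by
    intro a b ha hb
    exact ⟨by rw [← mul_assoc, ha.1], by rw [mul_assoc, hb.2]⟩

lemma mem_Sl {f : EE} {i : ℕ} : f ∈ Sl i ↔ P i * f = f ∧ f * P i = f := Iff.rfl

lemma Sl_mono : Monotone Sl := by
  intro i j hij f hf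
  obtain ⟨h1, h2⟩ := hf
  refine ⟨?_, ?_⟩
  · conv_lhs => rw [← h1, ← mul_assoc, P_mul_P hij]
    exact h1
  · conv_lhs => rw [← h2, mul_assoc, P_mul_P' hij]
    exact h2

lemma P_mem_Sl (i : ℕ) : P i ∈ Sl i := ⟨P_mul_P le_rfl, P_mul_P le_rfl⟩

noncomputable def Bsub : NonUnitalSubring EE where
  carrier := {f | ∃ i, f ∈ Sl i}
  zero_mem' := ⟨0, (Sl 0).zero_mem⟩
  add_mem' := by
    rintro a b ⟨i, ha⟩ ⟨j, hb⟩
    exact ⟨max i j, (Sl (max i j)).add_mem (Sl_mono (le_max_left i j) ha)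
      (Sl_mono (le_max_right i j) hb)⟩
  neg_mem' := by rintro a ⟨i, ha⟩; exact ⟨i, (Sl i).neg_mem ha⟩
  mul_mem' := by
    rintro a b ⟨i, ha⟩ ⟨j, hb⟩
    exact ⟨max i j, (Sl (max i j)).mul_mem (Sl_mono (le_max_left i j) ha)
      (Sl_mono (le_max_right i j) hb)⟩

lemma mem_Bsub {f : EE} : f ∈ Bsub ↔ ∃ i, f ∈ Sl i := Iff.rfl

abbrev BB : Type := Bsub

instance : SMulCommClass ℤ BB BB :=
  ⟨fun n x y => by
    show n • (x * y) = x * (n • y)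
    exact (map_zsmul (AddMonoidHom.mulLeft x) n y).symm⟩

noncomputable def SS (i : ℕ) : NonUnitalSubring BB where
  carrier := {x | (x : EE) ∈ Sl i}
  zero_mem' := (Sl i).zero_mem
  add_mem' := by intro a b ha hb; exact (Sl i).add_mem ha hb
  neg_mem' := by intro a ha; exact (Sl i).neg_mem ha
  mul_mem' := by intro a b ha hb; exact (Sl i).mul_mem ha hb

lemma mem_SS {x : BB} {i : ℕ} : x ∈ SS i ↔ (x : EE) ∈ Sl i := Iff.rfl

noncomputable def ee (i : ℕ) : BB := ⟨P i, ⟨i, P_mem_Sl i⟩⟩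

lemma ee_mem (i : ℕ) : ee i ∈ SS i := P_mem_Sl i

lemma SS_mono : Monotone SS := fun _ _ hij _ hx => Sl_mono hij hx

lemma SS_union (x : BB) : ∃ i, x ∈ SS i := mem_Bsub.1 x.2

lemma ee_unit (i : ℕ) : ∀ x ∈ SS i, ee i * x = x ∧ x * ee i = x := by
  intro x hx
  have h := mem_Sl.1 (mem_SS.1 hx)
  constructor
  · exact Subtype.ext h.1
  · exact Subtype.ext h.2

lemma P_single_le {i : ℕ} {p : ℕ × ℕ} (h : p.1 ≤ i) (c : ℚ) :
    P i (Finsupp.single p c) = Finsupp.single p c := by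
  rw [P, op_single]; simp [h]

lemma P_single_gt {i : ℕ} {p : ℕ × ℕ} (h : ¬ p.1 ≤ i) (c : ℚ) :
    P i (Finsupp.single p c) = 0 := by
  rw [P, op_single]; simp [h]

lemma not_unital_BB : ¬ ∃ u : BB, ∀ x : BB, u * x = x ∧ x * u = x := by
  rintro ⟨u, hu⟩
  obtain ⟨i, hui⟩ := mem_Bsub.1 u.2
  replace hui := mem_Sl.1 hui
  have hu0 : (u : EE) (Finsupp.single (i+1, 0) 1) = 0 := by
    conv_lhs => rw [← hui.2]
    rw [Module.End.mul_apply, P_single_gt (by simp) 1, map_zero]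
  have hx : (⟨P (i+1), ⟨i+1, P_mem_Sl _⟩⟩ : BB) = u * ⟨P (i+1), ⟨i+1, P_mem_Sl _⟩⟩ :=
    ((hu _).1).symm
  have h3 : P (i+1) (Finsupp.single (i+1, 0) 1)
      = ((u : EE) * P (i+1)) (Finsupp.single (i+1, 0) 1) := by
    have h4 := congrArg Subtype.val hx
    rw [MulMemClass.coe_mul] at h4
    exact DFunLike.congr_fun h4 _
  rw [Module.End.mul_apply, P_single_le (show ((i+1,0) : ℕ × ℕ).1 ≤ i+1 by simp),
    hu0] at h3
  exact one_ne_zero (Finsupp.single_eq_zero.1 h3)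


lemma op_none : op (fun _ => none) = 0 := by
  refine Finsupp.lhom_ext fun p c => ?_
  simp [op_single]

/-- isometry-like shifts inside level `i`, splitting `U_i` into `m+1` copies -/
noncomputable def sh (i m k : ℕ) : EE :=
  op fun p => if p.1 ≤ i then some (p.1, (m+1) * p.2 + k) else none

noncomputable def th (i m k : ℕ) : EE :=
  op fun p => if p.1 ≤ i ∧ p.2 % (m+1) = k then some (p.1, p.2 / (m+1)) else none

lemma sh_mem (i m k : ℕ) : sh i m k ∈ Sl i := by
  constructor
  · rw [P, sh, op_mul]; congr 1; funext p
    by_cases hp : p.1 ≤ i <;> simp [hp]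
  · rw [P, sh, op_mul]; congr 1; funext p
    by_cases hp : p.1 ≤ i <;> simp [hp]

lemma th_mem (i m k : ℕ) : th i m k ∈ Sl i := by
  constructor
  · rw [P, th, op_mul]; congr 1; funext p
    by_cases hp : p.1 ≤ i ∧ p.2 % (m+1) = k
    · simp [hp, hp.1]
    · simp [hp]
  · rw [P, th, op_mul]; congr 1; funext p
    by_cases hp : p.1 ≤ i
    · simp [hp]
    · simp [hp, fun (h : p.1 ≤ i ∧ _) => hp h.1]

lemma th_mul_sh (i m : ℕ) {k l : ℕ} (hk : k ≤ m) (hl : l ≤ m) :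
    th i m k * sh i m l = if k = l then P i else 0 := by
  rw [th, sh, op_mul]
  by_cases hkl : k = l
  · subst hkl
    rw [if_pos rfl, P]; congr 1; funext p
    by_cases hp : p.1 ≤ i
    · have h1 : ((m+1) * p.2 + k) % (m+1) = k := by
        rw [Nat.mul_add_mod, Nat.mod_eq_of_lt (by omega)]
      have h2 : ((m+1) * p.2 + k) / (m+1) = p.2 := by
        rw [Nat.mul_add_div (by omega), Nat.div_eq_of_lt (by omega), add_zero]
      simp [hp, h1, h2]
    · simp [hp]
  · rw [if_neg hkl, ← op_none]; congr 1; funext p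
    by_cases hp : p.1 ≤ i
    · have h1 : ((m+1) * p.2 + l) % (m+1) = l := by
        rw [Nat.mul_add_mod, Nat.mod_eq_of_lt (by omega)]
      simp [hp, h1, hkl, Ne.symm hkl]
    · simp [hp]

lemma sum_sh_mul_th (i m : ℕ) :
    ∑ k : Fin (m+1), sh i m (k : ℕ) * th i m (k : ℕ) = P i := by
  refine Finsupp.lhom_ext fun p c => ?_
  rw [LinearMap.sum_apply]
  by_cases hp : p.1 ≤ i
  · rw [P_single_le hp]
    have hlt : p.2 % (m+1) < m + 1 := Nat.mod_lt _ (by omega)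
    rw [Finset.sum_eq_single (⟨p.2 % (m+1), hlt⟩ : Fin (m+1))]
    · have e1 : th i m ((⟨p.2 % (m+1), hlt⟩ : Fin (m+1)) : ℕ) (Finsupp.single p c)
          = Finsupp.single (p.1, p.2 / (m+1)) c := by
        rw [th, op_single, if_pos (⟨hp, rfl⟩ : p.1 ≤ i ∧ p.2 % (m+1) = _)]
        rfl
      have e2 : sh i m ((⟨p.2 % (m+1), hlt⟩ : Fin (m+1)) : ℕ)
          (Finsupp.single (p.1, p.2 / (m+1)) c)
          = Finsupp.single (p.1, (m+1) * (p.2 / (m+1)) + p.2 % (m+1)) c := by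
        rw [sh, op_single, if_pos hp]
        rfl
      rw [Module.End.mul_apply, e1, e2, Nat.div_add_mod]
    · intro b _ hb
      rw [Module.End.mul_apply, th, op_single]
      have hcond : ¬ (p.1 ≤ i ∧ p.2 % (m+1) = (b : ℕ)) := by
        rintro ⟨-, h2⟩
        exact hb (Fin.ext (by simp [← h2]))
      simp [hcond]
    · intro h; exact absurd (Finset.mem_univ _) h
  · rw [P_single_gt hp]
    refine Finset.sum_eq_zero fun b _ => ?_
    rw [Module.End.mul_apply, th, op_single]
    simp [hp, fun (h : p.1 ≤ i ∧ _) => hp h.1]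

lemma Sl_P_apply {f : EE} {i : ℕ} (hf : f ∈ Sl i) (x : UU) : P i (f x) = f x := by
  conv_rhs => rw [← hf.1]
  rw [Module.End.mul_apply]

lemma Sl_apply_P {f : EE} {i : ℕ} (hf : f ∈ Sl i) (x : UU) : f (P i x) = f x := by
  conv_rhs => rw [← hf.2]
  rw [Module.End.mul_apply]

lemma th_sh_apply (i m : ℕ) {k l : ℕ} (hk : k ≤ m) (hl : l ≤ m) (w : UU) :
    th i m k (sh i m l w) = if k = l then P i w else 0 := by
  have h := DFunLike.congr_fun (th_mul_sh i m hk hl) w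
  rw [Module.End.mul_apply] at h
  rw [h]
  by_cases hkl : k = l <;> simp [hkl]

lemma SRleqIn_fails (i n : ℕ) : ¬ SRleqIn (SS i : Set BB) (ee i) n := by
  intro hSR
  set m := n + 1 with hm
  set bcol : Fin (m + 1) → BB := fun k => ⟨th i m (k : ℕ), ⟨i, th_mem i m _⟩⟩ with hbcol
  have hbS : ∀ k, bcol k ∈ (SS i : Set BB) := fun k => th_mem i m _
  have hbU : UnimodularIn (SS i : Set BB) (ee i) bcol := by
    refine ⟨hbS, fun k => ⟨sh i m (k : ℕ), ⟨i, sh_mem i m _⟩⟩, fun k => sh_mem i m _, ?_⟩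
    refine Subtype.ext ?_
    rw [AddSubmonoidClass.coe_finset_sum]
    simp only [MulMemClass.coe_mul]
    exact sum_sh_mul_th i m
  obtain ⟨v, hvS, hcS, a, haS, hsum⟩ := hSR m (by omega) bcol hbS hbU
  set z : UU := Finsupp.single (0, 0) 1 with hz
  have hPz : P i z = z := P_single_le (by simp) 1
  set ξ : UU := sh i m m z - ∑ k : Fin m, sh i m (k : ℕ) ((v k : EE) z) with hξ
  have hthm : th i m m ξ = z := by
    rw [hξ, map_sub, map_sum, th_sh_apply i m le_rfl le_rfl, if_pos rfl, hPz,
      Finset.sum_eq_zero, sub_zero]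
    intro k _
    rw [th_sh_apply i m le_rfl (by omega)]
    have hne : (m : ℕ) ≠ (k : ℕ) := by have := k.2; omega
    simp [hne]
  have hthk : ∀ k : Fin m, th i m (k : ℕ) ξ = - (v k : EE) z := by
    intro k
    have hkm : (k : ℕ) ≤ m := by have := k.2; omega
    rw [hξ, map_sub, map_sum, th_sh_apply i m hkm le_rfl]
    have hne : ((k : ℕ) : ℕ) ≠ m := by have := k.2; omega
    rw [if_neg hne, Finset.sum_eq_single k]
    · rw [th_sh_apply i m hkm hkm, if_pos rfl, Sl_P_apply (hvS k), zero_sub]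
    · intro b _ hb
      rw [th_sh_apply i m hkm (by have := b.2; omega)]
      exact if_neg fun h => hb (Fin.ext h.symm)
    · intro h; exact absurd (Finset.mem_univ _) h
  -- apply the Bezout identity of the reduced column to ξ
  have H := congrArg Subtype.val hsum
  rw [AddSubmonoidClass.coe_finset_sum] at H
  have H2 := DFunLike.congr_fun H ξ
  rw [LinearMap.sum_apply] at H2
  have hcz : ∀ k : Fin m,
      ((a k : EE) * ((bcol k.castSucc : BB) + v k * bcol (Fin.last m) : BB)) ξ = 0 := by
    intro k
    rw [Module.End.mul_apply]
    have hco : ((bcol k.castSucc + v k * bcol (Fin.last m) : BB) : EE)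
        = th i m (k : ℕ) + (v k : EE) * th i m m := by
      simp only [AddMemClass.coe_add, MulMemClass.coe_mul, hbcol, Fin.coe_castSucc,
        Fin.val_last]
    rw [hco, LinearMap.add_apply, Module.End.mul_apply, hthm, hthk k, neg_add_cancel,
      map_zero]
  have hee : ((ee i : BB) : EE) = P i := rfl
  rw [hee] at H2
  have H3 : P i ξ = 0 := by
    rw [← H2]
    refine Finset.sum_eq_zero fun k _ => ?_
    have := hcz k
    simp only [MulMemClass.coe_mul] at this ⊢
    exact this
  have : z = 0 := by
    rw [← hthm, ← Sl_apply_P (th_mem i m m) ξ, H3, map_zero]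
  exact one_ne_zero (Finsupp.single_eq_zero.1 this)

/-! ### The unitization acting on `UU` -/

lemma exists_level {t : ℕ} (f : Fin t → BB) : ∃ N, ∀ k, (f k : EE) ∈ Sl N := by
  choose lvl hlvl using fun k => SS_union (f k)
  exact ⟨Finset.univ.sup lvl, fun k =>
    Sl_mono (Finset.le_sup (Finset.mem_univ k)) (mem_SS.1 (hlvl k))⟩

lemma coe_zsmul (n : ℤ) (b : BB) : ((n • b : BB) : EE) = n • (b : EE) :=
  map_zsmul (AddSubgroupClass.subtype Bsub) n b

/-- the (additive) action of the unitization on `UU` -/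
noncomputable def rho : Unitization ℤ BB →+ EE where
  toFun x := x.fst • (1 : EE) + (x.snd : EE)
  map_zero' := by simp
  map_add' x y := by
    show (x + y).fst • (1 : EE) + ((x + y).snd : EE)
        = (x.fst • (1 : EE) + (x.snd : EE)) + (y.fst • (1 : EE) + (y.snd : EE))
    rw [Unitization.fst_add, Unitization.snd_add, add_smul, AddMemClass.coe_add]
    abel

lemma rho_apply (x : Unitization ℤ BB) (ξ : UU) :
    rho x ξ = x.fst • ξ + (x.snd : EE) ξ := rfl

lemma rho_mul (x y : Unitization ℤ BB) : rho (x * y) = rho x * rho y := by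
  refine LinearMap.ext fun ξ => ?_
  rw [Module.End.mul_apply, rho_apply, rho_apply, rho_apply, Unitization.fst_mul,
    Unitization.snd_mul]
  have hc : ((x.fst • y.snd + y.fst • x.snd + x.snd * y.snd : BB) : EE)
      = x.fst • (y.snd : EE) + y.fst • (x.snd : EE) + (x.snd : EE) * (y.snd : EE) := by
    rw [AddMemClass.coe_add, AddMemClass.coe_add, MulMemClass.coe_mul,
      coe_zsmul, coe_zsmul]
  rw [hc]
  simp only [LinearMap.add_apply, LinearMap.smul_apply, Module.End.mul_apply, map_add,
    map_zsmul, mul_smul, smul_add]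
  abel

lemma rho_one : rho (1 : Unitization ℤ BB) = 1 := by
  refine LinearMap.ext fun ξ => ?_
  rw [rho_apply]
  simp

lemma rho_inr (b : BB) : rho (Unitization.inr b) = (b : EE) := by
  refine LinearMap.ext fun ξ => ?_
  rw [rho_apply]
  simp

lemma rho_injective : Function.Injective rho := by
  have h : ∀ z : Unitization ℤ BB, rho z = 0 → z = 0 := by
    intro z hz
    obtain ⟨i, hi⟩ := mem_Bsub.1 z.snd.2
    have h1 := DFunLike.congr_fun hz (Finsupp.single (i+1, 0) 1)
    rw [rho_apply] at h1
    have h2 : ((z.snd : BB) : EE) (Finsupp.single (i+1, 0) 1) = 0 := by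
      rw [← Sl_apply_P hi, P_single_gt (by simp), map_zero]
    rw [h2, add_zero, LinearMap.zero_apply] at h1
    have h4 : z.fst • (Finsupp.single ((i+1 : ℕ), (0:ℕ)) (1:ℚ)) = 0 := h1
    rw [Finsupp.smul_single, zsmul_eq_mul, mul_one] at h4
    have h3 : z.fst = 0 := by exact_mod_cast Finsupp.single_eq_zero.1 h4
    have h6 : rho z = z.fst • (1 : EE) + (z.snd : EE) := rfl
    rw [hz, h3, zero_smul, zero_add] at h6
    have h7 : z.snd = 0 := Subtype.ext h6.symm
    exact Unitization.ext (by simpa using h3) (by simpa using h7)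
  intro x y hxy
  have := h (x - y) (by rw [map_sub, hxy, sub_self])
  exact sub_eq_zero.1 this

lemma mem_nuIdeal (x : Unitization ℤ BB) : x ∈ nuIdeal BB ↔ x.fst = 0 := by
  unfold nuIdeal
  exact TwoSidedIdeal.mem_mk' (R := Unitization ℤ BB) _ _ _ _ _ _ _

/-! ### The irreducible relative unimodular pair -/

noncomputable def tau (k : ℕ) : BB := ⟨th 0 1 k, ⟨0, th_mem 0 1 k⟩⟩
noncomputable def sig (k : ℕ) : BB := ⟨sh 0 1 k, ⟨0, sh_mem 0 1 k⟩⟩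

noncomputable def bpair : Fin 2 → Unitization ℤ BB :=
  ![1 + Unitization.inr (tau 0 - ee 0), Unitization.inr (tau 1)]

lemma rho_bpair0 (ξ : UU) : rho (bpair 0) ξ = ξ + th 0 1 0 ξ - P 0 ξ := by
  have h : bpair 0 = 1 + Unitization.inr (tau 0 - ee 0) := rfl
  rw [h, map_add, rho_one, rho_inr, LinearMap.add_apply, Module.End.one_apply,
    AddSubgroupClass.coe_sub, LinearMap.sub_apply]
  have h1 : ((tau 0 : BB) : EE) = th 0 1 0 := rfl
  have h2 : ((ee 0 : BB) : EE) = P 0 := rfl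
  rw [h1, h2]
  abel

lemma rho_bpair1 (ξ : UU) : rho (bpair 1) ξ = th 0 1 1 ξ := by
  have h : bpair 1 = Unitization.inr (tau 1) := rfl
  rw [h, rho_inr]
  rfl

lemma rho_apair0 (ξ : UU) :
    rho (1 + Unitization.inr (sig 0 - ee 0)) ξ = ξ + sh 0 1 0 ξ - P 0 ξ := by
  rw [map_add, rho_one, rho_inr, LinearMap.add_apply, Module.End.one_apply,
    AddSubgroupClass.coe_sub, LinearMap.sub_apply]
  have h1 : ((sig 0 : BB) : EE) = sh 0 1 0 := rfl
  have h2 : ((ee 0 : BB) : EE) = P 0 := rfl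
  rw [h1, h2]
  abel

lemma bpair_unimodular : RelUnimodular (R := Unitization ℤ BB) (nuIdeal BB) bpair := by
  refine ⟨?_, ?_, ![1 + Unitization.inr (sig 0 - ee 0), Unitization.inr (sig 1)], ?_, ?_, ?_⟩
  · rw [mem_nuIdeal]
    show (1 + Unitization.inr (tau 0 - ee 0) - 1 : Unitization ℤ BB).fst = 0
    simp [sub_eq_add_neg]
  · intro i hi
    fin_cases i
    · exact absurd rfl hi
    · rw [mem_nuIdeal]
      show (Unitization.inr (tau 1) : Unitization ℤ BB).fst = 0
      simp
  · rw [mem_nuIdeal]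
    show (1 + Unitization.inr (sig 0 - ee 0) - 1 : Unitization ℤ BB).fst = 0
    simp [sub_eq_add_neg]
  · intro i hi
    fin_cases i
    · exact absurd rfl hi
    · rw [mem_nuIdeal]
      show (Unitization.inr (sig 1) : Unitization ℤ BB).fst = 0
      simp
  · apply rho_injective
    rw [map_sum, rho_one, Fin.sum_univ_two]
    refine LinearMap.ext fun ξ => ?_
    rw [LinearMap.add_apply, rho_mul, rho_mul, Module.End.mul_apply, Module.End.mul_apply,
      Module.End.one_apply]
    have hb0 : (![1 + Unitization.inr (sig 0 - ee 0), Unitization.inr (sig 1)] :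
        Fin 2 → Unitization ℤ BB) 0 = 1 + Unitization.inr (sig 0 - ee 0) := rfl
    have hb1 : (![1 + Unitization.inr (sig 0 - ee 0), Unitization.inr (sig 1)] :
        Fin 2 → Unitization ℤ BB) 1 = Unitization.inr (sig 1) := rfl
    rw [hb0, hb1, rho_bpair0, rho_apair0, rho_inr]
    have hsig1 : ((sig 1 : BB) : EE) = sh 0 1 1 := rfl
    rw [hsig1, rho_bpair1]
    -- now a pure UU computation
    simp only [map_sub, map_add]
    have r1 : P 0 (th 0 1 0 ξ) = th 0 1 0 ξ := Sl_P_apply (th_mem 0 1 0) ξ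
    have r2 : P 0 (P 0 ξ) = P 0 ξ := Sl_P_apply (P_mem_Sl 0) ξ
    have r3 : sh 0 1 0 (P 0 ξ) = sh 0 1 0 ξ := Sl_apply_P (sh_mem 0 1 0) ξ
    have r5 : sh 0 1 0 (th 0 1 0 ξ) + sh 0 1 1 (th 0 1 1 ξ) = P 0 ξ := by
      have := DFunLike.congr_fun (sum_sh_mul_th 0 1) ξ
      rw [LinearMap.sum_apply, Fin.sum_univ_two] at this
      simpa using this
    have r5' : sh 0 1 0 (th 0 1 0 ξ) = P 0 ξ - sh 0 1 1 (th 0 1 1 ξ) := by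
      rw [← r5]; abel
    rw [r1, r2, r3, r5']
    abel

lemma bpair_irreducible : ¬ RelReducible (R := Unitization ℤ BB) (nuIdeal BB) bpair := by
  rintro ⟨v, hvI, hc⟩
  obtain ⟨hc0, -, a, ha0, -, hsum⟩ := hc
  rw [Fin.sum_univ_one] at hsum
  set g : EE := ((v 0).snd : EE) with hg
  have hv0 : ∀ ξ, rho (v 0) ξ = g ξ := by
    intro ξ
    rw [rho_apply, (mem_nuIdeal _).1 (hvI 0), zero_smul, zero_add]
  have hcol : (fun i : Fin 1 => bpair i.castSucc + v i * bpair (Fin.last 1)) 0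
      = bpair 0 + v 0 * bpair 1 := rfl
  set z : UU := Finsupp.single (0,0) 1 with hz
  set w : UU := g z with hw
  set ζ : UU := sh 0 1 1 z - sh 0 1 0 (P 0 w) - (w - P 0 w) with hζ
  have hPz : P 0 z = z := P_single_le (by simp) 1
  -- auxiliary values
  have haux : ∀ k : ℕ, k ≤ 1 → th 0 1 k (w - P 0 w) = 0 := by
    intro k hk
    rw [← Sl_apply_P (th_mem 0 1 k), map_sub, Sl_P_apply (P_mem_Sl 0), sub_self, map_zero]
  have hPaux : P 0 (w - P 0 w) = 0 := by
    rw [map_sub, Sl_P_apply (P_mem_Sl 0), sub_self]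
  have t0 : th 0 1 0 ζ = - P 0 w := by
    rw [hζ, map_sub, map_sub, th_sh_apply 0 1 (by omega) (by omega),
      th_sh_apply 0 1 (by omega) (by omega), haux 0 (by omega)]
    have h01 : (0 : ℕ) ≠ 1 := by omega
    rw [if_neg h01, if_pos rfl, Sl_P_apply (P_mem_Sl 0)]
    abel
  have t1 : th 0 1 1 ζ = z := by
    rw [hζ, map_sub, map_sub, th_sh_apply 0 1 (by omega) (by omega),
      th_sh_apply 0 1 (by omega) (by omega), haux 1 (by omega)]
    have h10 : (1 : ℕ) ≠ 0 := by omega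
    rw [if_neg h10, if_pos rfl, hPz]
    abel
  have p0 : P 0 ζ = sh 0 1 1 z - sh 0 1 0 (P 0 w) := by
    rw [hζ, map_sub, map_sub, Sl_P_apply (sh_mem 0 1 1), Sl_P_apply (sh_mem 0 1 0), hPaux]
    abel
  have hXζ : rho (bpair 0 + v 0 * bpair 1) ζ = 0 := by
    rw [map_add, LinearMap.add_apply, rho_mul, Module.End.mul_apply, rho_bpair1, hv0,
      rho_bpair0, t0, t1, p0, ← hw]
    rw [hζ]
    abel
  have happ := DFunLike.congr_fun (congrArg rho hsum) ζ
  rw [rho_mul, rho_one, Module.End.mul_apply, Module.End.one_apply, hcol, hXζ, map_zero] at happ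
  -- ζ = 0, but th 0 1 1 ζ = z ≠ 0
  rw [← happ] at t1
  rw [map_zero] at t1
  exact one_ne_zero (Finsupp.single_eq_zero.1 t1.symm)

/-! ### The reduction construction: relative stable rank at most 2 -/

noncomputable def jop (N : ℕ) : EE :=
  op fun p => if p.1 ≤ N then some (N+1, (N+1) * p.2 + p.1) else none

noncomputable def jopInv (N : ℕ) : EE :=
  op fun q => if q.1 = N+1 ∧ q.2 % (N+1) ≤ N then some (q.2 % (N+1), q.2 / (N+1)) else none

lemma jop_mem (N : ℕ) : jop N ∈ Sl (N+1) := by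
  constructor
  · rw [P, jop, op_mul]; congr 1; funext p
    by_cases hp : p.1 ≤ N <;> simp [hp]
  · rw [jop, P, op_mul]; congr 1; funext p
    by_cases hp : p.1 ≤ N
    · simp [hp, hp.trans (Nat.le_succ N)]
    · by_cases hq : p.1 ≤ N+1 <;> simp [hp, hq]

lemma P_jop (N : ℕ) : P N * jop N = 0 := by
  rw [P, jop, op_mul, ← op_none]; congr 1; funext p
  by_cases hp : p.1 ≤ N <;> simp [hp]

lemma jopInv_jop (N : ℕ) : jopInv N * jop N = P N := by
  rw [jopInv, jop, op_mul, P]; congr 1; funext p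
  by_cases hp : p.1 ≤ N
  · have h1 : ((N+1) * p.2 + p.1) % (N+1) = p.1 := by
      rw [Nat.mul_add_mod, Nat.mod_eq_of_lt (by omega)]
    have h2 : ((N+1) * p.2 + p.1) / (N+1) = p.2 := by
      rw [Nat.mul_add_div (by omega), Nat.div_eq_of_lt (by omega), add_zero]
    simp [hp, h1, h2]
  · simp [hp]

lemma jop_ker {N : ℕ} {x : UU} (h : jop N x = 0) : P N x = 0 := by
  have h2 := DFunLike.congr_fun (jopInv_jop N) x
  rw [Module.End.mul_apply, h, map_zero] at h2
  exact h2.symm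

lemma relSRleq_two : RelSRleq (R := Unitization ℤ BB) (nuIdeal BB) 2 := by
  intro m₀ hm b hb
  obtain ⟨m, rfl⟩ : ∃ m, m₀ = m + 1 := ⟨m₀ - 1, by omega⟩
  obtain ⟨hb0, hbi, a, ha0, hai, hsum⟩ := hb
  obtain ⟨N, hN⟩ := exists_level (fun k => (b k).snd)
  have hfst0 : (b 0).fst = 1 := by
    have h := (mem_nuIdeal _).1 hb0
    have h2 : (b 0 - 1).fst = (b 0).fst - 1 := by
      rw [sub_eq_add_neg, Unitization.fst_add, Unitization.fst_neg, Unitization.fst_one,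
        sub_eq_add_neg]
    rw [h2] at h
    omega
  have hfsti : ∀ i : Fin (m+3), i ≠ 0 → (b i).fst = 0 := fun i hi =>
    (mem_nuIdeal _).1 (hbi i hi)
  set J : BB := ⟨jop N, ⟨N+1, jop_mem N⟩⟩ with hJ
  set v : Fin (m+2) → Unitization ℤ BB :=
    fun k => if (k : ℕ) ≤ 1 then Unitization.inr J else 0 with hv
  set c : Fin (m+2) → Unitization ℤ BB :=
    fun k => b k.castSucc + v k * b (Fin.last (m+2)) with hc
  -- basic index facts
  have hlastne : (Fin.last (m+2)) ≠ 0 := by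
    simp [Fin.ext_iff]
  have hcastne : ∀ k : Fin (m+2), k ≠ 0 → (k.castSucc : Fin (m+3)) ≠ 0 := by
    intro k hk
    rw [Ne, Fin.castSucc_eq_zero_iff]
    exact hk
  -- notation for the snd parts
  set β : Fin (m+3) → EE := fun i => ((b i).snd : EE) with hβ
  have hβmem : ∀ i, β i ∈ Sl N := hN
  set w : EE := β (Fin.last (m+2)) with hwdef
  -- the operators d k
  set d : Fin (m+2) → EE :=
    fun k => β k.castSucc + (if (k : ℕ) ≤ 1 then jop N * w else 0) with hd
  have hdmem : ∀ k, d k ∈ Sl (N+1) := by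
    intro k
    refine (Sl (N+1)).add_mem (Sl_mono (Nat.le_succ N) (hβmem _)) ?_
    by_cases hk : (k : ℕ) ≤ 1
    · rw [if_pos hk]
      exact (Sl (N+1)).mul_mem (jop_mem N) (Sl_mono (Nat.le_succ N) (hβmem _))
    · rw [if_neg hk]; exact (Sl (N+1)).zero_mem
  -- pointwise description of rho (c k)
  have hrv : ∀ k : Fin (m+2), ∀ ξ : UU,
      rho (v k) ξ = (if (k : ℕ) ≤ 1 then jop N ξ else 0) := by
    intro k ξ
    by_cases hk : (k : ℕ) ≤ 1
    · rw [hv]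
      simp only [if_pos hk]
      rw [rho_inr]
    · rw [hv]
      simp only [if_neg hk]
      rw [map_zero, LinearMap.zero_apply]
  have hrblast : ∀ ξ, rho (b (Fin.last (m+2))) ξ = w ξ := by
    intro ξ
    rw [rho_apply, hfsti _ hlastne, zero_smul, zero_add]
  have hXd : ∀ k : Fin (m+2), ∀ ξ : UU,
      rho (c k) ξ = (if k = 0 then ξ else 0) + d k ξ := by
    intro k ξ
    rw [hc]
    simp only []
    rw [map_add, LinearMap.add_apply, rho_mul, Module.End.mul_apply, hrblast, hrv, rho_apply]
    rw [hd]
    simp only [LinearMap.add_apply]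
    have h1 : (b k.castSucc).fst • ξ = (if k = 0 then ξ else 0) := by
      by_cases hk : k = 0
      · subst hk
        have : (Fin.castSucc (0 : Fin (m+2))) = (0 : Fin (m+3)) := rfl
        rw [this, hfst0, one_smul, if_pos rfl]
      · rw [hfsti _ (hcastne k hk), zero_smul, if_neg hk]
    rw [h1]
    have h2 : (if (k : ℕ) ≤ 1 then jop N * w else 0) ξ
        = (if (k : ℕ) ≤ 1 then jop N (w ξ) else 0) := by
      by_cases hk : (k : ℕ) ≤ 1
      · rw [if_pos hk, if_pos hk, Module.End.mul_apply]
      · rw [if_neg hk, if_neg hk, LinearMap.zero_apply]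
    rw [h2]
    abel
  -- the joint kernel is zero
  have hker : ∀ ξ : UU, (∀ k : Fin (m+2), rho (c k) ξ = 0) → ξ = 0 := by
    intro ξ hξ
    have hone : ((1 : Fin (m+2)) : ℕ) = 1 := rfl
    -- from the entry 1
    have h1 := hξ 1
    rw [hXd] at h1
    have h1ne : (1 : Fin (m+2)) ≠ 0 := by
      simp [Fin.ext_iff]
    rw [if_neg h1ne, zero_add, hd] at h1
    simp only [LinearMap.add_apply, hone, if_pos (by omega : (1:ℕ) ≤ 1),
      Module.End.mul_apply] at h1
    -- split by P N
    have hsplit := congrArg (P N) h1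
    rw [map_add, map_zero, Sl_P_apply (hβmem _)] at hsplit
    have hPj : P N (jop N (w ξ)) = 0 := by
      have := DFunLike.congr_fun (P_jop N) (w ξ)
      rw [Module.End.mul_apply] at this
      rw [this, LinearMap.zero_apply]
    rw [hPj, add_zero] at hsplit
    -- so β (castSucc 1) ξ = 0 and jop N (w ξ) = 0
    have hjw : jop N (w ξ) = 0 := by
      rw [hsplit, zero_add] at h1
      exact h1
    have hwξ : w ξ = 0 := by
      have hPw : P N (w ξ) = w ξ := Sl_P_apply (hβmem _) ξ
      rw [← hPw]
      exact jop_ker hjw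
    -- all entries of b kill ξ
    have hall : ∀ i : Fin (m+3), rho (b i) ξ = 0 := by
      intro i
      induction i using Fin.lastCases with
      | last =>
          rw [hrblast]
          exact hwξ
      | cast k =>
          have hk := hξ k
          rw [hXd] at hk
          by_cases hk0 : k = 0
          · subst hk0
            rw [if_pos rfl, hd] at hk
            simp only [LinearMap.add_apply] at hk
            rw [if_pos (by norm_num : ((0 : Fin (m+2)) : ℕ) ≤ 1), Module.End.mul_apply,
              hjw] at hk
            have h0 : (Fin.castSucc (0 : Fin (m+2))) = (0 : Fin (m+3)) := rfl
            rw [rho_apply, h0, hfst0, one_smul]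
            rw [h0] at hk
            calc ξ + ((b (0 : Fin (m+3))).snd : EE) ξ
                = ξ + (β 0 ξ + 0) := by rw [add_zero]
              _ = 0 := hk
          · rw [if_neg hk0, zero_add, hd] at hk
            simp only [LinearMap.add_apply] at hk
            rw [rho_apply, hfsti _ (hcastne k hk0), zero_smul, zero_add]
            by_cases hk1 : (k : ℕ) ≤ 1
            · rw [if_pos hk1, Module.End.mul_apply, hjw] at hk
              rw [add_zero] at hk
              exact hk
            · rw [if_neg hk1, LinearMap.zero_apply, add_zero] at hk
              exact hk
    have hs := congrArg rho hsum
    rw [map_sum, rho_one] at hs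
    have hs2 := DFunLike.congr_fun hs ξ
    rw [LinearMap.sum_apply, Module.End.one_apply] at hs2
    rw [← hs2]
    refine Finset.sum_eq_zero fun i _ => ?_
    rw [rho_mul, Module.End.mul_apply, hall, map_zero]
  -- left inverse business
  set Φ : UU →ₗ[ℚ] (Fin (m+2) → UU) := LinearMap.pi (fun k => (rho (c k) : EE)) with hΦ
  have hkerΦ : LinearMap.ker Φ = ⊥ := by
    rw [LinearMap.ker_eq_bot']
    intro ξ hξ
    refine hker ξ fun k => ?_
    have := congrFun hξ k
    rw [hΦ] at this
    rw [LinearMap.pi_apply] at this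
    exact this
  obtain ⟨G, hG⟩ := Φ.exists_leftInverse_of_injective hkerΦ
  set g : Fin (m+2) → EE :=
    fun k => G.comp (LinearMap.single ℚ (fun _ : Fin (m+2) => UU) k) with hgdef
  have hg : ∀ ξ : UU, ∑ k, g k (rho (c k) ξ) = ξ := by
    intro ξ
    have h1 : ∑ k, (LinearMap.single ℚ (fun _ : Fin (m+2) => UU) k) (rho (c k) ξ) = Φ ξ := by
      rw [hΦ]
      refine Eq.trans ?_ (Finset.univ_sum_single (Φ ξ))
      refine Finset.sum_congr rfl fun k _ => ?_
      rw [LinearMap.coe_single]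
      congr 1
    calc ∑ k, g k (rho (c k) ξ)
        = G (∑ k, (LinearMap.single ℚ (fun _ : Fin (m+2) => UU) k) (rho (c k) ξ)) := by
          rw [map_sum]
          rfl
      _ = G (Φ ξ) := by rw [h1]
      _ = ξ := by
          have := DFunLike.congr_fun hG ξ
          rwa [LinearMap.comp_apply, LinearMap.id_apply] at this
  -- compression
  set Q : EE := P (N+1) with hQ
  have hQXk : ∀ k : Fin (m+2), ∀ ξ : UU, Q (rho (c k) ξ) = rho (c k) (Q ξ) := by
    intro k ξ
    rw [hXd, hXd, map_add]
    have h1 : Q (d k ξ) = d k ξ := Sl_P_apply (hdmem k) ξ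
    have h2 : d k (Q ξ) = d k ξ := Sl_apply_P (hdmem k) ξ
    rw [h1, h2]
    by_cases hk : k = 0
    · rw [if_pos hk, if_pos hk]
    · rw [if_neg hk, if_neg hk, map_zero]
  set γ : Fin (m+2) → EE := fun k => Q * g k * Q - (if k = 0 then Q else 0) with hγ
  have hγmem : ∀ k, γ k ∈ Sl (N+1) := by
    intro k
    refine (Sl (N+1)).sub_mem ?_ ?_
    · have hQm : Q ∈ Sl (N+1) := P_mem_Sl (N+1)
      have : Q * g k * Q ∈ Sl (N+1) := by
        constructor
        · rw [← mul_assoc, ← mul_assoc, (P_mem_Sl (N+1)).1]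
        · rw [mul_assoc, (P_mem_Sl (N+1)).2]
      exact this
    · by_cases hk : k = 0
      · rw [if_pos hk]; exact P_mem_Sl (N+1)
      · rw [if_neg hk]; exact (Sl (N+1)).zero_mem
  set a' : Fin (m+2) → Unitization ℤ BB :=
    fun k => (if k = 0 then 1 else 0) + Unitization.inr (⟨γ k, ⟨N+1, hγmem k⟩⟩ : BB)
    with ha'
  have hra' : ∀ k : Fin (m+2), ∀ ξ : UU,
      rho (a' k) ξ = (if k = 0 then ξ else 0) + γ k ξ := by
    intro k ξ
    rw [ha']
    simp only []
    rw [map_add, LinearMap.add_apply, rho_inr]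
    have h1 : rho (if k = 0 then (1 : Unitization ℤ BB) else 0) ξ
        = (if k = 0 then ξ else 0) := by
      by_cases hk : k = 0
      · rw [if_pos hk, if_pos hk, rho_one, Module.End.one_apply]
      · rw [if_neg hk, if_neg hk, map_zero, LinearMap.zero_apply]
    rw [h1]
  -- the reduction
  refine ⟨v, ?_, ?_, ?_, ?_⟩
  · intro k
    rw [mem_nuIdeal, hv]
    by_cases hk : (k : ℕ) ≤ 1
    · simp [hk]
    · simp [hk]
  · -- c 0 - 1 ∈ I
    rw [mem_nuIdeal]
    have h0 : (c 0 - 1).fst = (c 0).fst - 1 := by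
      rw [sub_eq_add_neg, Unitization.fst_add, Unitization.fst_neg, Unitization.fst_one,
        sub_eq_add_neg]
    rw [h0, hc]
    simp only []
    rw [Unitization.fst_add, Unitization.fst_mul]
    have hv0 : (v 0).fst = 0 := by
      rw [hv]; simp
    have hcs0 : (Fin.castSucc (0 : Fin (m+2))) = (0 : Fin (m+3)) := rfl
    rw [hv0, hcs0, hfst0, zero_mul, add_zero]
    omega
  · -- the other entries are in I
    intro i hi
    rw [mem_nuIdeal]
    show (b i.castSucc + v i * b (Fin.last (m+2))).fst = 0
    rw [Unitization.fst_add, Unitization.fst_mul, hfsti _ (hcastne i hi)]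
    have hvi : (v i).fst = 0 := by
      rw [hv]
      by_cases hk : (i : ℕ) ≤ 1 <;> simp [hk]
    rw [hvi, zero_mul, add_zero]
  · -- the Bezout relation for the reduced column
    refine ⟨a', ?_, ?_, ?_⟩
    · rw [mem_nuIdeal]
      have h0 : (a' 0 - 1).fst = (a' 0).fst - 1 := by
        rw [sub_eq_add_neg, Unitization.fst_add, Unitization.fst_neg, Unitization.fst_one,
          sub_eq_add_neg]
      rw [h0, ha']
      simp
    · intro i hi
      rw [mem_nuIdeal, ha']
      simp [hi]
    · -- the sum
      apply rho_injective
      rw [map_sum, rho_one]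
      refine LinearMap.ext fun ξ => ?_
      rw [LinearMap.sum_apply, Module.End.one_apply]
      have hterm : ∀ k : Fin (m+2),
          rho (a' k * c k) ξ = (if k = 0 then rho (c k) ξ else 0) + γ k (rho (c k) ξ) := by
        intro k
        rw [rho_mul, Module.End.mul_apply, hra']
      rw [Finset.sum_congr rfl fun k _ => hterm k]
      rw [Finset.sum_add_distrib]
      have hfirst : ∑ k : Fin (m+2), (if k = 0 then rho (c k) ξ else 0) = rho (c 0) ξ := by
        rw [Finset.sum_eq_single 0]
        · rw [if_pos rfl]
        · intro b _ hb
          rw [if_neg hb]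
        · intro h
          exact absurd (Finset.mem_univ _) h
      rw [hfirst]
      have hsecond : ∑ k : Fin (m+2), γ k (rho (c k) ξ)
          = Q ξ - Q (rho (c 0) ξ) := by
        have hγapp : ∀ k : Fin (m+2), γ k (rho (c k) ξ)
            = Q (g k (Q (rho (c k) ξ))) - (if k = 0 then Q (rho (c 0) ξ) else 0) := by
          intro k
          rw [hγ]
          simp only [LinearMap.sub_apply, Module.End.mul_apply]
          congr 1
          by_cases hk : k = 0
          · rw [if_pos hk, if_pos hk, hk]
          · rw [if_neg hk, if_neg hk, LinearMap.zero_apply]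
        rw [Finset.sum_congr rfl fun k _ => hγapp k, Finset.sum_sub_distrib]
        have hA : ∑ k : Fin (m+2), Q (g k (Q (rho (c k) ξ))) = Q ξ := by
          have h1 : ∀ k : Fin (m+2), Q (rho (c k) ξ) = rho (c k) (Q ξ) := fun k => hQXk k ξ
          calc ∑ k : Fin (m+2), Q (g k (Q (rho (c k) ξ)))
              = Q (∑ k : Fin (m+2), g k (rho (c k) (Q ξ))) := by
                rw [map_sum]
                refine Finset.sum_congr rfl fun k _ => ?_
                rw [h1]
            _ = Q (Q ξ) := by rw [hg (Q ξ)]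
            _ = Q ξ := Sl_P_apply (P_mem_Sl (N+1)) ξ
        have hB : ∑ k : Fin (m+2), (if k = 0 then Q (rho (c 0) ξ) else 0)
            = Q (rho (c 0) ξ) := by
          rw [Finset.sum_eq_single 0]
          · rw [if_pos rfl]
          · intro b _ hb
            rw [if_neg hb]
          · intro h
            exact absurd (Finset.mem_univ _) h
        rw [hA, hB]
      rw [hsecond]
      have hX0 : rho (c 0) ξ = ξ + d 0 ξ := by
        rw [hXd, if_pos rfl]
      have hQX0 : Q (rho (c 0) ξ) = Q ξ + d 0 ξ := by
        rw [hX0, map_add, Sl_P_apply (hdmem 0)]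
      rw [hQX0, hX0]
      abel

/-! ### Assembling the example -/

lemma srIn_top (i : ℕ) : srIn (SS i : Set BB) (ee i) = ⊤ := by
  have hempty : {c : ℕ∞ | ∃ n : ℕ, c = n ∧ SRleqIn (SS i : Set BB) (ee i) n} = ∅ := by
    ext c
    simp only [Set.mem_setOf_eq, Set.mem_empty_iff_false, iff_false, not_exists]
    rintro n ⟨-, hn⟩
    exact SRleqIn_fails i n hn
  rw [srIn, hempty, sInf_empty]

lemma relSRleq_not_le_one {n : ℕ} (hn : n ≤ 1) : ¬ RelSRleq (R := Unitization ℤ BB) (nuIdeal BB) n := by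
  intro h
  exact bpair_irreducible (h 0 (by omega) bpair bpair_unimodular)

lemma srNU_two : srNU BB = 2 := by
  rw [srNU, relSr]
  apply le_antisymm
  · refine sInf_le ⟨2, by norm_num, relSRleq_two⟩
  · refine le_sInf fun c hc => ?_
    obtain ⟨n, rfl, hn⟩ := hc
    have h2 : 2 ≤ n := by
      by_contra hlt
      exact relSRleq_not_le_one (by omega) hn
    exact_mod_cast h2

noncomputable def theExample : SrDropExample where
  B := BB
  S := SS
  mono := SS_mono
  union := SS_union
  e := ee
  e_mem := ee_mem
  e_unit := ee_unit
  not_unital := not_unital_BB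
  sr_top := srIn_top
  sr_two := srNU_two

end SrDrop

/-- There exists a direct limit (directed union along non-unital inclusions) of unital rings
of infinite stable rank whose limit has stable rank `2`; in particular the inequality
`sr(lim R_i) ≤ liminf sr(R_i)` can be strict: `2 < ∞`. -/
theorem exists_sr_drop_in_nonunital_direct_limit :
    Nonempty SrDropExample ∧ (2 : ℕ∞) < ⊤ := by
  exact ⟨⟨SrDrop.theExample⟩, lt_top_iff_ne_top.2 (by decide)⟩
end
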